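/- arXiv:cs/0609127 — 9 statements merged into one kernel-verified Lean document; each statement's English description precedes it below -/
import Mathlib

section
/- Let o : {A, A', B, B', C} → Bool be any orientation assignment to the five buses of an (A,B)-perp such that for each of the three connectors x, y, z, at most two of its adjacent buses receive the same orientation value. Then o(B) = o(B'), i.e., B and B' must be drawn parallel. -/
def ValidConn {α : Type} [DecidableEq α] (o : α → Bool) (S : Finset α) : Prop :=
  ∀ v : Bool, (S.filter fun b => o b = v).card ≤ 2

lemma not_three {α : Type} [DecidableEq α] {o : α → Bool} {S : Finset α}
    (h : ValidConn o S) {a b c : α} (hab : a ≠ b) (hac : a ≠ c) (hbc : b ≠ c)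
    (ha : a ∈ S) (hb : b ∈ S) (hc : c ∈ S) {v : Bool}
    (va : o a = v) (vb : o b = v) (vc : o c = v) : False := by
  have hsub : ({a, b, c} : Finset α) ⊆ S.filter fun x => o x = v := by
    intro x hx
    simp only [Finset.mem_insert, Finset.mem_singleton] at hx
    rcases hx with rfl | rfl | rfl <;> simp [Finset.mem_filter, *]
  have hcard : ({a, b, c} : Finset α).card = 3 := by
    rw [Finset.card_insert_of_notMem (by simp [hab, hac]),
        Finset.card_insert_of_notMem (by simp [hbc]), Finset.card_singleton]
  have := Finset.card_le_card hsub
  have h2 := h v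
  omega

/-- In an (A,B)-perp (buses A=0, A'=1, B=2, B'=3, C=4; connectors x,y,z
adjacent to {A,A',B,B'}, {A,A',B,C}, {A,A',B',C}), any orientation assignment
in which each connector is adjacent to at most two buses of each orientation
satisfies o(B) = o(B'): B and B' are parallel. -/
theorem perp_B_parallel_B' (o : Fin 5 → Bool)
    (hvalid : ∀ S ∈ ([{0,1,2,3}, {0,1,2,4}, {0,1,3,4}] : List (Finset (Fin 5))),
      ValidConn o S) :
    o 2 = o 3 := by
  have h1 := hvalid {0,1,2,3} (by simp)
  have h2 := hvalid {0,1,2,4} (by simp)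
  have h3 := hvalid {0,1,3,4} (by simp)
  by_cases h01 : o 0 = o 1
  · -- o0 = o1 = v; then o2 ≠ v and o3 ≠ v from connector x
    have hn2 : o 2 ≠ o 0 := fun he =>
      not_three h1 (a := 0) (b := 1) (c := 2) (by decide) (by decide) (by decide)
        (by decide) (by decide) (by decide) rfl h01.symm he
    have hn3 : o 3 ≠ o 0 := fun he =>
      not_three h1 (a := 0) (b := 1) (c := 3) (by decide) (by decide) (by decide)
        (by decide) (by decide) (by decide) rfl h01.symm he
    cases hv : o 0 <;> cases h2' : o 2 <;> cases h3' : o 3 <;> simp_all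
  · -- o0 ≠ o1; from y: o2 ≠ o4, from z: o3 ≠ o4
    have h24 : o 2 ≠ o 4 := by
      intro he
      rcases Bool.eq_or_eq_not (o 0) (o 2) with h02 | h02
      · exact not_three h2 (a := 0) (b := 2) (c := 4) (by decide) (by decide) (by decide)
          (by decide) (by decide) (by decide) h02 rfl he.symm
      · have h12 : o 1 = o 2 := by
          cases h0 : o 0 <;> cases h1' : o 1 <;> simp_all
        exact not_three h2 (a := 1) (b := 2) (c := 4) (by decide) (by decide) (by decide)
          (by decide) (by decide) (by decide) h12 rfl he.symm
    have h34 : o 3 ≠ o 4 := by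
      intro he
      rcases Bool.eq_or_eq_not (o 0) (o 3) with h03 | h03
      · exact not_three h3 (a := 0) (b := 3) (c := 4) (by decide) (by decide) (by decide)
          (by decide) (by decide) (by decide) h03 rfl he.symm
      · have h13 : o 1 = o 3 := by
          cases h0 : o 0 <;> cases h1' : o 1 <;> simp_all
        exact not_three h3 (a := 1) (b := 3) (c := 4) (by decide) (by decide) (by decide)
          (by decide) (by decide) (by decide) h13 rfl he.symm
    cases h2' : o 2 <;> cases h3' : o 3 <;> cases h4 : o 4 <;> simp_all
end

section
/- Let o : {A, A', B, B', C} → Bool be any orientation assignment to the five buses of an (A,B)-perp such that each connector among x, y, z is adjacent to at most two buses of each orientation value. Then o(A) ≠ o(B), i.e., A and B must be drawn perpendicular to each other. -/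
/-- In an (A,B)-perp (buses A=0, A'=1, B=2, B'=3, C=4; connectors x,y,z
adjacent to {A,A',B,B'}, {A,A',B,C}, {A,A',B',C}), any orientation assignment
in which each connector is adjacent to at most two buses of each orientation
satisfies o(A) ≠ o(B): A and B are perpendicular. -/
theorem perp_A_perp_B (o : Fin 5 → Bool)
    (hvalid : ∀ S ∈ ([{0,1,2,3}, {0,1,2,4}, {0,1,3,4}] : List (Finset (Fin 5))),
      ValidConn o S) :
    o 0 ≠ o 2 := by
  simp only [List.mem_cons, List.mem_singleton, forall_eq_or_imp, forall_eq] at hvalid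
  obtain ⟨h1, h2, h3, -⟩ := hvalid
  intro h
  have e1t := h1 true; have e2t := h2 true; have e3t := h3 true
  have e1f := h1 false; have e2f := h2 false; have e3f := h3 false
  simp [Finset.filter_insert, Finset.filter_singleton] at e1t e2t e3t e1f e2f e3f
  cases h0 : o 0 <;> cases h1' : o 1 <;> cases h3' : o 3 <;> cases h4 : o 4 <;>
    simp_all
end

section
/- Let o : {A, A', B, B', C} → Bool be any orientation assignment to the five buses of an (A,B)-perp such that each connector among x, y, z is adjacent to at most two buses of each orientation value. Then o(A) = o(A'), i.e., A and A' must be drawn parallel. -/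
/-- In an (A,B)-perp (buses A=0, A'=1, B=2, B'=3, C=4; connectors x,y,z
adjacent to {A,A',B,B'}, {A,A',B,C}, {A,A',B',C}), any orientation assignment
in which each connector is adjacent to at most two buses of each orientation
satisfies o(A) = o(A'): A and A' are parallel. -/
theorem perp_A_parallel_A' (o : Fin 5 → Bool)
    (hvalid : ∀ S ∈ ([{0,1,2,3}, {0,1,2,4}, {0,1,3,4}] : List (Finset (Fin 5))),
      ValidConn o S) :
    o 0 = o 1 := by
  have h1t := hvalid {0,1,2,3} (by simp) true
  have h1f := hvalid {0,1,2,3} (by simp) false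
  have h2t := hvalid {0,1,2,4} (by simp) true
  have h2f := hvalid {0,1,2,4} (by simp) false
  have h3t := hvalid {0,1,3,4} (by simp) true
  have h3f := hvalid {0,1,3,4} (by simp) false
  clear hvalid
  rw [show (({0,1,2,3} : Finset (Fin 5))) = insert 0 (insert 1 (insert 2 {3})) from rfl,
    Finset.filter_insert, Finset.filter_insert, Finset.filter_insert,
    Finset.filter_singleton] at h1t h1f
  rw [show (({0,1,2,4} : Finset (Fin 5))) = insert 0 (insert 1 (insert 2 {4})) from rfl,
    Finset.filter_insert, Finset.filter_insert, Finset.filter_insert,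
    Finset.filter_singleton] at h2t h2f
  rw [show (({0,1,3,4} : Finset (Fin 5))) = insert 0 (insert 1 (insert 3 {4})) from rfl,
    Finset.filter_insert, Finset.filter_insert, Finset.filter_insert,
    Finset.filter_singleton] at h3t h3f
  rcases Bool.eq_false_or_eq_true (o 0) with ha|ha <;>
  rcases Bool.eq_false_or_eq_true (o 1) with hb|hb <;>
  rcases Bool.eq_false_or_eq_true (o 2) with hc|hc <;>
  rcases Bool.eq_false_or_eq_true (o 3) with hd|hd <;>
  rcases Bool.eq_false_or_eq_true (o 4) with he|he <;>
  first
  | exact ha.trans hb.symm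
  | (simp only [ha, hb, hc, hd, he, reduceIte] at h1t h1f h2t h2f h3t h3f
     rw [ha, hb]
     revert h1t h1f h2t h2f h3t h3f
     decide)
end

section
/- The bipartite graph G = (B, C; E) constructed from a NAE-3SAT instance φ via the PARTITION-BY-ORIENTATION reduction admits a partition of B into B_H and B_V with every connector adjacent to at most two vertices in B_H and at most two in B_V, if and only if φ has a not-all-equal satisfying assignment. -/
lemma perp_key : ∀ f : Fin 5 → Bool,
    (∀ S ∈ ([{0,1,2,3}, {0,1,2,4}, {0,1,3,4}] : List (Finset (Fin 5))),
      ValidConn f S) → f 2 = !f 0 := by unfold ValidConn; decide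

lemma perp_sat : ∀ b : Bool, ∀ S ∈ ([{0,1,2,3}, {0,1,2,4}, {0,1,3,4}] :
    List (Finset (Fin 5))), ValidConn (fun j : Fin 5 => if j.val ≤ 1 then b else !b) S := by
  unfold ValidConn; decide

lemma filter_three {α : Type} [DecidableEq α] (p : α → Prop) [DecidablePred p]
    (x y z : α) (hxy : x ≠ y) (hxz : x ≠ z) (hyz : y ≠ z) :
    (({x,y,z} : Finset α).filter p).card =
      (if p x then 1 else 0) + (if p y then 1 else 0) + (if p z then 1 else 0) := by
  rw [Finset.card_filter]
  rw [Finset.sum_insert (by simp [hxy, hxz]), Finset.sum_insert (by simp [hyz]),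
    Finset.sum_singleton, add_assoc]

lemma validConn_three {α : Type} [DecidableEq α] (o : α → Bool)
    (x y z : α) (hxy : x ≠ y) (hxz : x ≠ z) (hyz : y ≠ z) :
    ValidConn o {x,y,z} ↔ ¬(o x = o y ∧ o y = o z) := by
  unfold ValidConn
  constructor
  · intro h hc
    have := h (o x)
    rw [filter_three _ x y z hxy hxz hyz] at this
    obtain ⟨h1, h2⟩ := hc
    rw [if_pos rfl, if_pos h1.symm, if_pos (h2.symm.trans h1.symm)] at this
    omega
  · intro h v
    rw [filter_three _ x y z hxy hxz hyz]
    cases hx : o x <;> cases hy : o y <;> cases hz : o z <;> cases v <;>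
      simp_all

lemma nae_fin3 : ∀ v : Fin 3 → Bool, ¬(v 0 = v 1 ∧ v 1 = v 2) →
    (∃ μ, v μ = true) ∧ (∃ μ, v μ = false) := by decide

lemma nae_fin3' : ∀ v : Fin 3 → Bool, (∃ μ, v μ = true) → (∃ μ, v μ = false) →
    ¬(v 0 = v 1 ∧ v 1 = v 2) := by decide

/-- PARTITION-BY-ORIENTATION reduction from NAE-3SAT. For each variable i
create an (A,B)-perp with buses (i,0)=A (literal xᵢ), (i,1)=A', (i,2)=B
(literal ¬xᵢ), (i,3)=B', (i,4)=C and connectors adjacent to {A,A',B,B'},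
{A,A',B,C}, {A,A',B',C}. For each clause q create a connector adjacent to the
three buses representing its literals. The resulting graph admits a valid
2-coloring of its buses (every connector adjacent to at most two buses of each
color) iff the NAE-3SAT instance has a not-all-equal satisfying assignment. -/
theorem partition_by_orientation_reduction {n m : ℕ}
    (clauses : Fin m → (Fin n × Bool) × (Fin n × Bool) × (Fin n × Bool))
    (lit : Fin m → Fin 3 → Fin n × Bool)
    (hlit : ∀ q, lit q = ![(clauses q).1, (clauses q).2.1, (clauses q).2.2])
    (hdist : ∀ q, (lit q 0).1 ≠ (lit q 1).1 ∧ (lit q 0).1 ≠ (lit q 2).1 ∧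
      (lit q 1).1 ≠ (lit q 2).1) :
    (∃ o : Fin n × Fin 5 → Bool,
      (∀ i : Fin n, ∀ S ∈ ([{0,1,2,3}, {0,1,2,4}, {0,1,3,4}] :
          List (Finset (Fin 5))), ValidConn (fun j => o (i, j)) S) ∧
      (∀ q : Fin m, ValidConn o
        {((lit q 0).1, if (lit q 0).2 then (0 : Fin 5) else 2),
         ((lit q 1).1, if (lit q 1).2 then (0 : Fin 5) else 2),
         ((lit q 2).1, if (lit q 2).2 then (0 : Fin 5) else 2)}))
    ↔ (∃ σ : Fin n → Bool, ∀ q : Fin m,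
        (∃ μ : Fin 3, (if (lit q μ).2 then σ (lit q μ).1 else !σ (lit q μ).1) = true) ∧
        (∃ μ : Fin 3, (if (lit q μ).2 then σ (lit q μ).1 else !σ (lit q μ).1) = false)) := by
  constructor
  · rintro ⟨o, hperp, hcl⟩
    refine ⟨fun i => o (i, 0), fun q => ?_⟩
    obtain ⟨h01, h02, h12⟩ := hdist q
    have hkey : ∀ i : Fin n, o (i, 2) = !o (i, 0) := fun i =>
      perp_key (fun j => o (i, j)) (hperp i)
    set bus : Fin 3 → Fin n × Fin 5 :=
      fun μ => ((lit q μ).1, if (lit q μ).2 then (0 : Fin 5) else 2) with hbus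
    have hval : ∀ μ : Fin 3,
        (if (lit q μ).2 then o ((lit q μ).1, 0) else !o ((lit q μ).1, 0)) = o (bus μ) := by
      intro μ
      by_cases hp : (lit q μ).2 <;> simp [hbus, hp, hkey]
    have hv := hcl q
    rw [validConn_three o _ _ _ (by simp [h01]) (by simp [h02]) (by simp [h12])] at hv
    have := nae_fin3 (fun μ => o (bus μ)) (by exact hv)
    obtain ⟨⟨μ1, hμ1⟩, ⟨μ2, hμ2⟩⟩ := this
    exact ⟨⟨μ1, (hval μ1).trans hμ1⟩, ⟨μ2, (hval μ2).trans hμ2⟩⟩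
  · rintro ⟨σ, hσ⟩
    refine ⟨fun p => if p.2.val ≤ 1 then σ p.1 else !σ p.1, fun i => perp_sat (σ i), ?_⟩
    intro q
    obtain ⟨h01, h02, h12⟩ := hdist q
    set o : Fin n × Fin 5 → Bool := fun p => if p.2.val ≤ 1 then σ p.1 else !σ p.1 with ho
    set bus : Fin 3 → Fin n × Fin 5 :=
      fun μ => ((lit q μ).1, if (lit q μ).2 then (0 : Fin 5) else 2) with hbus
    have hval : ∀ μ : Fin 3,
        (if (lit q μ).2 then σ (lit q μ).1 else !σ (lit q μ).1) = o (bus μ) := by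
      intro μ
      by_cases hp : (lit q μ).2 <;> simp [ho, hbus, hp]
    obtain ⟨⟨μ1, hμ1⟩, ⟨μ2, hμ2⟩⟩ := hσ q
    have := nae_fin3' (fun μ => o (bus μ)) ⟨μ1, (hval μ1).symm.trans hμ1⟩
      ⟨μ2, (hval μ2).symm.trans hμ2⟩
    rw [validConn_three o _ _ _ (by simp [h01]) (by simp [h02]) (by simp [h12])]
    exact this
end

section
/- Let φ be a NAE-3SAT instance and G the full bus graph constructed from φ (variable boxes, (I,O)-chains, and clause connectors c_q adjacent to the three chain-output buses O_{q,1}, O_{q,2}, O_{q,3}). If G admits a valid Boolean orientation assignment of its buses (every connector adjacent to at most two buses of each orientation), then the assignment σ defined by σ(x_i) = true iff the literal bus X_i is oriented vertically is a not-all-equal satisfying assignment for φ. -/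
/-- Connector neighborhoods inside each variable box, on its 13 buses:
A = Xᵢ = 0, A' = 1, B = X̄ᵢ = 2, B' = 3, C = 4, R_A = 5, S_A = 6, T_A = 7,
U_A = 8, R_B = 9, S_B = 10, T_B = 11, U_B = 12. -/
def boxConns : List (Finset (Fin 13)) :=
  [{0,1,2,3}, {0,1,2,4}, {0,1,3,4},
   {0,5,6,8}, {0,5,7,8}, {0,6,7,8},
   {2,9,10,12}, {2,9,11,12}, {2,10,11,12}]

/-- Connector neighborhoods inside each (I,O)-chain, on its 20 buses:
I = 2, I₁ = 7, I₂ = 12, I₃ = 15, O = 17 (each flipper contributes a perp plus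
its output connector). -/
def chainConns : List (Finset (Fin 20)) :=
  [{0,1,2,3}, {0,1,2,4}, {0,1,3,4}, {2,3,7},
   {5,6,7,8}, {5,6,7,9}, {5,6,8,9}, {7,8,12},
   {10,11,12,13}, {10,11,12,14}, {10,11,13,14}, {12,13,15},
   {15,16,17,18}, {15,16,17,19}, {15,16,18,19}]

instance {α : Type} [DecidableEq α] (o : α → Bool) (S : Finset α) : Decidable (ValidConn o S) :=
  inferInstanceAs (Decidable (∀ v : Bool, (S.filter fun b => o b = v).card ≤ 2))

namespace ValidConn

variable {α : Type} [DecidableEq α] {o : α → Bool}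

theorem map_iff {β : Type} [DecidableEq β] (e : β ↪ α) (S : Finset β) :
    ValidConn o (S.map e) ↔ ValidConn (o ∘ e) S := by
  simp only [ValidConn, Finset.filter_map, Finset.card_map]
  rfl

theorem exists_eq_of_three {x y z : α} (hxy : x ≠ y) (hxz : x ≠ z) (hyz : y ≠ z)
    (h : ValidConn o {x, y, z}) (v : Bool) : o x = v ∨ o y = v ∨ o z = v := by
  by_contra! hv
  have hall : ({x, y, z} : Finset α).filter (fun b => o b = !v) = {x, y, z} :=
    Finset.filter_true_of_mem (by simpa [Bool.eq_not] using hv)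
  have h3 := h (!v)
  rw [hall, Finset.card_eq_three.2 ⟨x, y, z, hxy, hxz, hyz, rfl⟩] at h3
  omega

theorem eq_of_eq_not {x y z : α} (hxy : x ≠ y) (hxz : x ≠ z) (hyz : y ≠ z)
    (h : ValidConn o {x, y, z}) {v : Bool} (hx : o x = !v) (hy : o y = !v) : o z = v :=
  ((h.exists_eq_of_three hxy hxz hyz v).resolve_left (by simp [hx])).resolve_left (by simp [hy])

end ValidConn

theorem forall_validConn_comp {α β : Type} [DecidableEq α] [DecidableEq β] {o : α → Bool}
    {L : List (Finset β)} {L' : List (Finset α)} (e : β ↪ α) (h : ∀ S ∈ L', ValidConn o S)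
    (hL : ∀ S ∈ L, S.map e ∈ L') : ∀ S ∈ L, ValidConn (o ∘ e) S :=
  fun S hS => (ValidConn.map_iff e S).1 (h _ (hL S hS))

def perpConns : List (Finset (Fin 5)) := [{0,1,2,3}, {0,1,2,4}, {0,1,3,4}]

def flipperConns : List (Finset (Fin 6)) := [{0,1,2,3}, {0,1,2,4}, {0,1,3,4}, {2,3,5}]

theorem perp_of_validConn (g : Fin 5 → Bool) (h : ∀ S ∈ perpConns, ValidConn g S) :
    g 2 = !g 0 ∧ g 3 = !g 0 ∧ g 4 = !g 0 := by
  revert g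
  decide

theorem flipper_of_validConn (g : Fin 6 → Bool) (h : ∀ S ∈ flipperConns, ValidConn g S) :
    g 5 = !g 2 := by
  revert g
  decide

theorem box_occurrence_eq_not_literal (f : Fin 13 → Bool) (h : ∀ S ∈ boxConns, ValidConn f S)
    (pol : Bool) :
    f (if pol then 5 else 9) = !(if pol then f 0 else !f 0) ∧
      f (if pol then 6 else 10) = !(if pol then f 0 else !f 0) := by
  have hX : f 2 = !f 0 :=
    (perp_of_validConn _ (forall_validConn_comp ⟨![0, 1, 2, 3, 4], by decide⟩ h (by decide))).1
  -- each side of the box is a perp whose shared pair is the literal bus and U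
  have hA : f 5 = !f 0 ∧ f 6 = !f 0 ∧ f 7 = !f 0 :=
    perp_of_validConn _ (forall_validConn_comp ⟨![0, 8, 5, 6, 7], by decide⟩ h (by decide))
  have hB : f 9 = !f 2 ∧ f 10 = !f 2 ∧ f 11 = !f 2 :=
    perp_of_validConn _ (forall_validConn_comp ⟨![2, 12, 9, 10, 11], by decide⟩ h (by decide))
  cases pol
  · simp [hB.1, hB.2.1, hX]
  · simp [hA.1, hA.2.1]

theorem chain_output_eq_input (f : Fin 20 → Bool) (h : ∀ S ∈ chainConns, ValidConn f S) :
    f 17 = f 2 := by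
  have h₁ : f 7 = !f 2 :=
    flipper_of_validConn _ (forall_validConn_comp ⟨![0, 1, 2, 3, 4, 7], by decide⟩ h (by decide))
  have h₂ : f 12 = !f 7 :=
    flipper_of_validConn _ (forall_validConn_comp ⟨![5, 6, 7, 8, 9, 12], by decide⟩ h (by decide))
  have h₃ : f 15 = !f 12 := flipper_of_validConn _
    (forall_validConn_comp ⟨![10, 11, 12, 13, 14, 15], by decide⟩ h (by decide))
  have h₄ : f 17 = !f 15 := (perp_of_validConn _
    (forall_validConn_comp ⟨![15, 16, 17, 18, 19], by decide⟩ h (by decide))).1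
  rw [h₄, h₃, h₂, h₁, Bool.not_not, Bool.not_not]

/-- Buses are `Sum.inl (i, j)` in the variable box of variable `i` and `Sum.inr (q, μ, j)` in the
(I,O)-chain of the `μ`-th literal of clause `q`; `o b = true` means that `b` is vertical. `hocc` is
the occurrence connector `{R, S, I}` and `hclause` the clause connector `c_q`. -/
theorem busgraph_orientation_gives_NAE_general {n m : ℕ}
    (lit : Fin m → Fin 3 → Fin n × Bool)
    (o : (Fin n × Fin 13) ⊕ (Fin m × Fin 3 × Fin 20) → Bool)
    (hbox : ∀ i : Fin n, ∀ S ∈ boxConns,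
      ValidConn (fun j => o (Sum.inl (i, j))) S)
    (hchain : ∀ (q : Fin m) (μ : Fin 3), ∀ S ∈ chainConns,
      ValidConn (fun j => o (Sum.inr (q, μ, j))) S)
    (hocc : ∀ (q : Fin m) (μ : Fin 3),
      ValidConn o
        {Sum.inl ((lit q μ).1, if (lit q μ).2 then (5 : Fin 13) else 9),
         Sum.inl ((lit q μ).1, if (lit q μ).2 then (6 : Fin 13) else 10),
         Sum.inr (q, μ, (2 : Fin 20))})
    (hclause : ∀ q : Fin m,
      ValidConn o
        {Sum.inr (q, (0 : Fin 3), (17 : Fin 20)),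
         Sum.inr (q, 1, 17), Sum.inr (q, 2, 17)}) :
    ∀ q : Fin m,
      (∃ μ : Fin 3, (if (lit q μ).2 then o (Sum.inl ((lit q μ).1, 0))
          else !o (Sum.inl ((lit q μ).1, 0))) = true) ∧
      (∃ μ : Fin 3, (if (lit q μ).2 then o (Sum.inl ((lit q μ).1, 0))
          else !o (Sum.inl ((lit q μ).1, 0))) = false) := by
  intro q
  have hout : ∀ μ, o (Sum.inr (q, μ, 17)) = if (lit q μ).2 then o (Sum.inl ((lit q μ).1, 0))
      else !o (Sum.inl ((lit q μ).1, 0)) := by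
    intro μ
    obtain ⟨hR, hS⟩ := box_occurrence_eq_not_literal _ (hbox (lit q μ).1) (lit q μ).2
    rw [chain_output_eq_input _ (hchain q μ)]
    exact (hocc q μ).eq_of_eq_not (by split_ifs <;> simp) (by simp) (by simp) hR hS
  have hclause_exists (v : Bool) : ∃ μ : Fin 3, o (Sum.inr (q, μ, 17)) = v := by
    rcases (hclause q).exists_eq_of_three (by simp) (by simp) (by simp) v with h | h | h
    exacts [⟨0, h⟩, ⟨1, h⟩, ⟨2, h⟩]
  simp only [← hout]
  exact ⟨hclause_exists true, hclause_exists false⟩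

/-- Soundness of the NAE-3SAT reduction at the orientation level. The bus graph
built from a NAE-3SAT instance has buses (i, j) for the variable box of
variable i, and (q, μ, j) for the (I,O)-chain of the μ-th literal of clause q.
Besides the internal connectors of boxes and chains, there is, for each clause
q and slot μ with literal (i, pol), an occurrence connector adjacent to
{R, S, I} where R, S are the flipper buses on the corresponding side of the
variable box of i and I is the input bus of the chain (q,μ); and a clause
connector c_q adjacent to the three chain output buses O_{q,1}, O_{q,2},
O_{q,3}. If the buses admit a valid orientation assignment (every connector
adjacent to at most two buses of each orientation, with true = vertical), then
σ(xᵢ) := (Xᵢ is vertical) is a not-all-equal satisfying assignment for the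
instance: every clause has a true literal and a false literal. -/
theorem busgraph_orientation_gives_NAE {n m : ℕ}
    (clauses : Fin m → (Fin n × Bool) × (Fin n × Bool) × (Fin n × Bool))
    (lit : Fin m → Fin 3 → Fin n × Bool)
    (hlit : ∀ q, lit q = ![(clauses q).1, (clauses q).2.1, (clauses q).2.2])
    (o : (Fin n × Fin 13) ⊕ (Fin m × Fin 3 × Fin 20) → Bool)
    (hbox : ∀ i : Fin n, ∀ S ∈ boxConns,
      ValidConn (fun j => o (Sum.inl (i, j))) S)
    (hchain : ∀ (q : Fin m) (μ : Fin 3), ∀ S ∈ chainConns,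
      ValidConn (fun j => o (Sum.inr (q, μ, j))) S)
    (hocc : ∀ (q : Fin m) (μ : Fin 3),
      ValidConn o
        {Sum.inl ((lit q μ).1, if (lit q μ).2 then (5 : Fin 13) else 9),
         Sum.inl ((lit q μ).1, if (lit q μ).2 then (6 : Fin 13) else 10),
         Sum.inr (q, μ, (2 : Fin 20))})
    (hclause : ∀ q : Fin m,
      ValidConn o
        {Sum.inr (q, (0 : Fin 3), (17 : Fin 20)),
         Sum.inr (q, 1, 17), Sum.inr (q, 2, 17)}) :
    ∀ q : Fin m,
      (∃ μ : Fin 3, (if (lit q μ).2 then o (Sum.inl ((lit q μ).1, 0))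
          else !o (Sum.inl ((lit q μ).1, 0))) = true) ∧
      (∃ μ : Fin 3, (if (lit q μ).2 then o (Sum.inl ((lit q μ).1, 0))
          else !o (Sum.inl ((lit q μ).1, 0))) = false) :=
  busgraph_orientation_gives_NAE_general lit o hbox hchain hocc hclause
end

section
/- The bus graph constructed from a PARTITION instance ⟨A, s⟩ (central bus B* of length (1/2)·Σ s(a) − 1; for each a ∈ A a bus B_a of length s(a) − 1 joined to B* by s(a) connectors) is realizable on the grid if and only if A can be partitioned into A' and A∖A' with Σ_{a∈A'} s(a) = Σ_{a∉A'} s(a). -/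
/-- An axis-parallel closed grid segment. `coord` is the fixed coordinate
(the y-coordinate if horizontal, the x-coordinate if vertical), and the
segment spans from `lo` to `hi` in the other coordinate. -/
structure GridSeg where
  horiz : Bool
  coord : ℤ
  lo : ℤ
  hi : ℤ

/-- The set of grid points covered by a grid segment. -/
def GridSeg.pts (s : GridSeg) : Set (ℤ × ℤ) :=
  if s.horiz then {p | p.2 = s.coord ∧ s.lo ≤ p.1 ∧ p.1 ≤ s.hi}
  else {p | p.1 = s.coord ∧ s.lo ≤ p.2 ∧ p.2 ≤ s.hi}

/-- The foot of the perpendicular from a point to the line of a grid segment. -/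
def foot (c : ℤ × ℤ) (s : GridSeg) : ℤ × ℤ :=
  if s.horiz then (c.1, s.coord) else (s.coord, c.2)

/-- The closed segment from `c` to its perpendicular foot on the line of `s`. -/
def edgePts (c : ℤ × ℤ) (s : GridSeg) : Set (ℤ × ℤ) :=
  if s.horiz then {p | p.1 = c.1 ∧ min c.2 s.coord ≤ p.2 ∧ p.2 ≤ max c.2 s.coord}
  else {p | p.2 = c.2 ∧ min c.1 s.coord ≤ p.1 ∧ p.1 ≤ max c.1 s.coord}

/-- A grid realization of a bus graph: buses are axis-parallel closed grid
segments, connectors are grid points, and each edge is drawn as a straight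
segment from the connector, perpendicular to the bus it joins, containing no
other bus or connector; buses and connectors are pairwise non-intersecting. -/
structure Realization {B C : Type} (adj : C → Finset B) where
  bus : B → GridSeg
  conn : C → ℤ × ℤ
  bus_disjoint : ∀ b b' : B, b ≠ b' → Disjoint (bus b).pts (bus b').pts
  conn_inj : Function.Injective conn
  conn_off_bus : ∀ (c : C) (b : B), conn c ∉ (bus b).pts
  edge_foot : ∀ c : C, ∀ b ∈ adj c, foot (conn c) (bus b) ∈ (bus b).pts
  edge_avoids_bus : ∀ c : C, ∀ b ∈ adj c, ∀ b' : B,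
    ∀ p ∈ edgePts (conn c) (bus b), p ∈ (bus b').pts → b' = b
  edge_avoids_conn : ∀ c : C, ∀ b ∈ adj c, ∀ c' : C,
    conn c' ∈ edgePts (conn c) (bus b) → c' = c

/-!
Transposing if necessary, `B*` is horizontal. Every connector sees `B*` along a vertical edge
ending on `B*`, so each of the `T` columns of `B*` carries at most one connector above `B*` and one
below it; as there are `2T` connectors, exactly `T` lie below `B*`. All connectors of one `B_a` lie
on the same side of `B*`: edges to a horizontal `B_a` cannot cross `B*`, and a vertical `B_a`
crossing the line of `B*` would have only `s a - 1` rows available for its `s a` connectors. So the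
elements whose connectors lie below `B*` form one half of an equal partition.

Conversely, the buses of each half are laid side by side along one side of `B*`.
-/


namespace GridSeg

def transpose (g : GridSeg) : GridSeg := ⟨!g.horiz, g.coord, g.lo, g.hi⟩

lemma mem_pts_of_horiz {g : GridSeg} (h : g.horiz = true) {p : ℤ × ℤ} :
    p ∈ g.pts ↔ p.2 = g.coord ∧ g.lo ≤ p.1 ∧ p.1 ≤ g.hi := by
  simp [pts, h]

lemma mem_pts_of_vert {g : GridSeg} (h : g.horiz = false) {p : ℤ × ℤ} :
    p ∈ g.pts ↔ p.1 = g.coord ∧ g.lo ≤ p.2 ∧ p.2 ≤ g.hi := by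
  simp [pts, h]

lemma mem_edgePts_of_horiz {g : GridSeg} (h : g.horiz = true) {c p : ℤ × ℤ} :
    p ∈ edgePts c g ↔ p.1 = c.1 ∧ min c.2 g.coord ≤ p.2 ∧ p.2 ≤ max c.2 g.coord := by
  simp [edgePts, h]

lemma mem_transpose_pts (g : GridSeg) (p : ℤ × ℤ) : p ∈ g.transpose.pts ↔ p.swap ∈ g.pts := by
  cases h : g.horiz <;> simp [transpose, pts, h]

lemma foot_swap_transpose (p : ℤ × ℤ) (g : GridSeg) :
    foot p.swap g.transpose = (foot p g).swap := by
  cases h : g.horiz <;> simp [transpose, foot, h]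

lemma mem_edgePts_swap_transpose (c p : ℤ × ℤ) (g : GridSeg) :
    p ∈ edgePts c.swap g.transpose ↔ p.swap ∈ edgePts c g := by
  cases h : g.horiz <;> simp [transpose, edgePts, h]

end GridSeg

namespace Realization

variable {B C : Type} {adj : C → Finset B} (R : Realization adj)

def transpose : Realization adj where
  bus b := (R.bus b).transpose
  conn c := (R.conn c).swap
  bus_disjoint b b' h := Set.disjoint_left.2 fun p hp hp' =>
    Set.disjoint_left.1 (R.bus_disjoint b b' h) ((GridSeg.mem_transpose_pts _ _).1 hp)
      ((GridSeg.mem_transpose_pts _ _).1 hp')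
  conn_inj := Prod.swap_injective.comp R.conn_inj
  conn_off_bus c b h := R.conn_off_bus c b ((GridSeg.mem_transpose_pts _ _).1 h)
  edge_foot c b hb := by
    rw [GridSeg.foot_swap_transpose, GridSeg.mem_transpose_pts, Prod.swap_swap]
    exact R.edge_foot c b hb
  edge_avoids_bus c b hb b' p hp hp' :=
    R.edge_avoids_bus c b hb b' p.swap ((GridSeg.mem_edgePts_swap_transpose _ _ _).1 hp)
      ((GridSeg.mem_transpose_pts _ _).1 hp')
  edge_avoids_conn c b hb c' h :=
    R.edge_avoids_conn c b hb c' (by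
      simpa using (GridSeg.mem_edgePts_swap_transpose _ (R.conn c').swap _).1 h)

variable {b b' : B} {c c' : C}

lemma conn_fst_mem_Icc (hb : (R.bus b).horiz = true) (hc : b ∈ adj c) :
    (R.conn c).1 ∈ Set.Icc (R.bus b).lo (R.bus b).hi := by
  have h := R.edge_foot c b hc
  rw [GridSeg.mem_pts_of_horiz hb] at h
  simpa [foot, hb] using h.2

lemma conn_snd_mem_Icc (hb : (R.bus b).horiz = false) (hc : b ∈ adj c) :
    (R.conn c).2 ∈ Set.Icc (R.bus b).lo (R.bus b).hi :=
  R.transpose.conn_fst_mem_Icc (b := b) (by simp [transpose, GridSeg.transpose, hb]) hc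

lemma conn_snd_ne_coord (hb : (R.bus b).horiz = true) (hc : b ∈ adj c) :
    (R.conn c).2 ≠ (R.bus b).coord := fun h =>
  R.conn_off_bus c b ((GridSeg.mem_pts_of_horiz hb).2 ⟨h, R.conn_fst_mem_Icc hb hc⟩)

/-- Otherwise the edge of the farther connector passes through the nearer one. -/
lemma eq_of_conn_fst_eq (hb : (R.bus b).horiz = true) (hc : b ∈ adj c) (hc' : b ∈ adj c')
    (hx : (R.conn c).1 = (R.conn c').1)
    (hside : (R.conn c).2 < (R.bus b).coord ↔ (R.conn c').2 < (R.bus b).coord) : c = c' := by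
  have hy := R.conn_snd_ne_coord hb hc
  have hy' := R.conn_snd_ne_coord hb hc'
  have on_edge : ∀ {d d' : C}, b ∈ adj d → (R.conn d').1 = (R.conn d).1 →
      min (R.conn d).2 (R.bus b).coord ≤ (R.conn d').2 →
      (R.conn d').2 ≤ max (R.conn d).2 (R.bus b).coord → d' = d := fun hd hx h₁ h₂ =>
    R.edge_avoids_conn _ b hd _ ((GridSeg.mem_edgePts_of_horiz hb).2 ⟨hx, h₁, h₂⟩)
  rcases le_total (R.conn c).2 (R.conn c').2 with hle | hle <;>
    by_cases hlt : (R.conn c).2 < (R.bus b).coord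
  · exact on_edge hc hx.symm (by omega) (by omega) |>.symm
  · exact on_edge hc' hx (by omega) (by omega)
  · exact on_edge hc' hx (by omega) (by omega)
  · exact on_edge hc hx.symm (by omega) (by omega) |>.symm

lemma eq_of_conn_snd_eq (hb : (R.bus b).horiz = false) (hc : b ∈ adj c) (hc' : b ∈ adj c')
    (hy : (R.conn c).2 = (R.conn c').2)
    (hside : (R.conn c).1 < (R.bus b).coord ↔ (R.conn c').1 < (R.bus b).coord) : c = c' :=
  R.transpose.eq_of_conn_fst_eq (b := b) (by simp [transpose, GridSeg.transpose, hb]) hc hc' hy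
    hside

lemma card_le_card_Icc (hb : (R.bus b).horiz = true) {S : Finset C} (hS : ∀ c ∈ S, b ∈ adj c)
    (hside : ∀ c ∈ S, ∀ c' ∈ S,
      ((R.conn c).2 < (R.bus b).coord ↔ (R.conn c').2 < (R.bus b).coord)) :
    S.card ≤ (Finset.Icc (R.bus b).lo (R.bus b).hi).card :=
  Finset.card_le_card_of_injOn (fun c => (R.conn c).1)
    (fun c hc => Finset.mem_Icc.2 (R.conn_fst_mem_Icc hb (hS c hc)))
    (fun c hc c' hc' hx => R.eq_of_conn_fst_eq hb (hS c hc) (hS c' hc') hx (hside c hc c' hc'))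

/-- The vertical edge from `c` to `b'` must not meet `b`. -/
lemma conn_snd_lt_coord_iff (hb : (R.bus b).horiz = true) (hb' : (R.bus b').horiz = true)
    (hne : b' ≠ b) (hc : b ∈ adj c) (hc' : b' ∈ adj c) :
    (R.conn c).2 < (R.bus b).coord ↔ (R.bus b').coord < (R.bus b).coord := by
  have hy := R.conn_snd_ne_coord hb hc
  have hmiss : ¬ (min (R.conn c).2 (R.bus b').coord ≤ (R.bus b).coord ∧
      (R.bus b).coord ≤ max (R.conn c).2 (R.bus b').coord) := fun h =>
    hne <| R.edge_avoids_bus c b' hc' b ((R.conn c).1, (R.bus b).coord)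
      ((GridSeg.mem_edgePts_of_horiz hb').2 ⟨rfl, h⟩)
      ((GridSeg.mem_pts_of_horiz hb).2 ⟨rfl, R.conn_fst_mem_Icc hb hc⟩) |>.symm
  omega

/-- `b'` meets the line of `b` outside `b`, so the connectors of `S` lie on one side of `b'`;
hence their rows are pairwise distinct, and the row of `b` is not among them. -/
lemma card_lt_card_Icc_of_crossing (hb : (R.bus b).horiz = true) (hb' : (R.bus b').horiz = false)
    {S : Finset C} (hS : ∀ c ∈ S, b ∈ adj c ∧ b' ∈ adj c)
    (hcross : (R.bus b).coord ∈ Set.Icc (R.bus b').lo (R.bus b').hi) :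
    S.card < (Finset.Icc (R.bus b').lo (R.bus b').hi).card := by
  have hne : b ≠ b' := by rintro rfl; simp [hb] at hb'
  have hout : (R.bus b').coord ∉ Set.Icc (R.bus b).lo (R.bus b).hi := fun h =>
    Set.disjoint_left.1 (R.bus_disjoint b b' hne)
      ((GridSeg.mem_pts_of_horiz hb (p := ((R.bus b').coord, (R.bus b).coord))).2 ⟨rfl, h⟩)
      ((GridSeg.mem_pts_of_vert hb').2 ⟨rfl, hcross⟩)
  have hside : ∀ c ∈ S, ∀ c' ∈ S,
      ((R.conn c).1 < (R.bus b').coord ↔ (R.conn c').1 < (R.bus b').coord) := by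
    intro c hc c' hc'
    have h := R.conn_fst_mem_Icc hb (hS c hc).1
    have h' := R.conn_fst_mem_Icc hb (hS c' hc').1
    simp only [Set.mem_Icc] at h h' hout
    omega
  calc S.card ≤ ((Finset.Icc (R.bus b').lo (R.bus b').hi).erase (R.bus b).coord).card :=
        Finset.card_le_card_of_injOn (fun c => (R.conn c).2)
          (fun c hc => Finset.mem_erase.2 ⟨R.conn_snd_ne_coord hb (hS c hc).1,
            Finset.mem_Icc.2 (R.conn_snd_mem_Icc hb' (hS c hc).2)⟩)
          (fun c hc c' hc' hy =>
            R.eq_of_conn_snd_eq hb' (hS c hc).2 (hS c' hc').2 hy (hside c hc c' hc'))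
    _ < _ := Finset.card_erase_lt_of_mem (Finset.mem_Icc.2 hcross)

end Realization

lemma Finset.exists_pairwiseDisjoint_Ico {ι : Type*} [DecidableEq ι] (f : ι → ℕ) (S : Finset ι) :
    ∃ base : ι → ℕ, (∀ i ∈ S, base i + f i ≤ ∑ j ∈ S, f j) ∧
      (S : Set ι).PairwiseDisjoint fun i => Finset.Ico (base i) (base i + f i) := by
  induction S using Finset.induction_on with
  | empty => exact ⟨0, by simp, by simp⟩
  | insert a S ha ih =>
    obtain ⟨base, hle, hdisj⟩ := ih
    have hne : ∀ j ∈ S, j ≠ a := fun j hj h => ha (h ▸ hj)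
    refine ⟨Function.update base a (∑ j ∈ S, f j), ?_, ?_⟩
    · intro i hi
      rw [Finset.sum_insert ha]
      rcases Finset.mem_insert.1 hi with rfl | hi
      · simp [add_comm]
      · rw [Function.update_of_ne (hne i hi)]
        linarith [hle i hi]
    · rw [Finset.coe_insert, Set.pairwiseDisjoint_insert_of_notMem (by simpa using ha)]
      refine ⟨fun i hi j hj hij => ?_, fun j hj => ?_⟩
      · simpa only [Function.onFun, Function.update_of_ne (hne i hi),
          Function.update_of_ne (hne j hj)] using hdisj hi hj hij
      · rw [Function.update_self, Function.update_of_ne (hne j hj)]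
        exact Finset.disjoint_left.2 fun x hx hx' => by
          simp only [Finset.mem_Ico] at hx hx'
          linarith [hle j hj]

section PartitionBusGraph

variable {α : Type} [DecidableEq α] (s : α → ℕ)

/-- `none` is the central bus `B*` and `some a` the bus `B_a`; `⟨a, i⟩` is the `i`-th connector
of `a`. -/
abbrev partitionBusGraph (c : (a : α) × Fin (s a)) : Finset (Option α) := {some c.1, none}

variable {s}

lemma conn_snd_lt_coord_iff_of_horiz (R : Realization (partitionBusGraph s))
    (h₀ : (R.bus none).horiz = true)
    (hlen : ∀ a, (R.bus (some a)).hi - (R.bus (some a)).lo = (s a : ℤ) - 1) (a : α)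
    (i j : Fin (s a)) :
    (R.conn ⟨a, i⟩).2 < (R.bus none).coord ↔ (R.conn ⟨a, j⟩).2 < (R.bus none).coord := by
  cases ha : (R.bus (some a)).horiz
  · have hmiss : (R.bus none).coord ∉ Set.Icc (R.bus (some a)).lo (R.bus (some a)).hi :=
      fun hcross => by
        have := R.card_lt_card_Icc_of_crossing h₀ ha
          (S := Finset.univ.image (Sigma.mk a)) (by simp) hcross
        have hsize : (R.bus (some a)).hi + 1 - (R.bus (some a)).lo = s a := by
          linarith [hlen a]
        rw [Finset.card_image_of_injective _ sigma_mk_injective, Int.card_Icc, hsize] at this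
        simp at this
    have hi := R.conn_snd_mem_Icc ha (c := ⟨a, i⟩) (by simp)
    have hj := R.conn_snd_mem_Icc ha (c := ⟨a, j⟩) (by simp)
    simp only [Set.mem_Icc] at hi hj hmiss
    omega
  · rw [R.conn_snd_lt_coord_iff h₀ ha (by simp) (by simp) (by simp),
      R.conn_snd_lt_coord_iff h₀ ha (by simp) (by simp) (by simp)]

lemma exists_equal_partition_of_horiz [Fintype α] {T : ℕ} (htot : ∑ a, s a = 2 * T)
    (R : Realization (partitionBusGraph s)) (h₀ : (R.bus none).horiz = true)
    (hlen₀ : (R.bus none).hi - (R.bus none).lo = (T : ℤ) - 1)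
    (hlen : ∀ a, (R.bus (some a)).hi - (R.bus (some a)).lo = (s a : ℤ) - 1) :
    ∃ A' : Finset α, ∑ a ∈ A', s a = ∑ a ∈ A'ᶜ, s a := by
  set Y := (R.bus none).coord
  have hIcc : (Finset.Icc (R.bus none).lo (R.bus none).hi).card = T := by
    rw [Int.card_Icc]; omega
  have hcard_le : ∀ p : Prop, ∀ S : Finset ((a : α) × Fin (s a)),
      (∀ c ∈ S, ((R.conn c).2 < Y ↔ p)) → S.card ≤ T := fun p S hS =>
    hIcc ▸ R.card_le_card_Icc h₀ (by simp) fun c hc c' hc' => by rw [hS c hc, hS c' hc']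
  set below := Finset.univ.filter fun c : (a : α) × Fin (s a) => (R.conn c).2 < Y
  set above := Finset.univ.filter fun c : (a : α) × Fin (s a) => ¬ (R.conn c).2 < Y
  have hbelow : below.card ≤ T := hcard_le True below (by simp [below])
  have habove : above.card ≤ T := hcard_le False above (by simp [above])
  have hsplit : below.card + above.card = 2 * T := by
    rw [Finset.card_filter_add_card_filter_not, Finset.card_univ, Fintype.card_sigma, ← htot]
    simp
  set A' := Finset.univ.filter fun a => ∀ i : Fin (s a), (R.conn ⟨a, i⟩).2 < Y
  have hbelow_eq : below = A'.sigma fun _ => Finset.univ := by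
    ext ⟨a, i⟩
    simp only [below, A', Finset.mem_filter, Finset.mem_sigma, Finset.mem_univ, true_and,
      and_true]
    exact ⟨fun h j => (conn_snd_lt_coord_iff_of_horiz R h₀ hlen a i j).1 h, fun h => h i⟩
  have hA' : ∑ a ∈ A', s a = T := by
    have : below.card = T := by omega
    simpa [hbelow_eq, Finset.card_sigma] using this
  have := Finset.sum_add_sum_compl A' s
  exact ⟨A', by omega⟩

lemma exists_equal_partition_of_realization [Fintype α] {T : ℕ} (htot : ∑ a, s a = 2 * T)
    (R : Realization (partitionBusGraph s))
    (hlen₀ : (R.bus none).hi - (R.bus none).lo = (T : ℤ) - 1)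
    (hlen : ∀ a, (R.bus (some a)).hi - (R.bus (some a)).lo = (s a : ℤ) - 1) :
    ∃ A' : Finset α, ∑ a ∈ A', s a = ∑ a ∈ A'ᶜ, s a := by
  cases h₀ : (R.bus none).horiz
  · exact exists_equal_partition_of_horiz htot R.transpose
      (by simp [Realization.transpose, GridSeg.transpose, h₀]) hlen₀ hlen
  · exact exists_equal_partition_of_horiz htot R h₀ hlen₀ hlen

/-- The elements with `σ a = 1` are placed above the central bus (row `0`, columns `0, …, T - 1`),
the others below: the connectors of `a` occupy the columns `base a, …, base a + s a - 1` of row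
`σ a`, and the bus of `a` runs over the same columns in row `2 σ a`. -/
lemma exists_realization_of_sides (T : ℕ) (σ base : α → ℤ) (hσ : ∀ a, σ a = 1 ∨ σ a = -1)
    (hbase : ∀ a, 0 ≤ base a ∧ base a + s a ≤ T)
    (hdisj : ∀ a b, σ a = σ b → ∀ x, base a ≤ x → x < base a + s a → base b ≤ x →
      x < base b + s b → a = b) :
    ∃ R : Realization (partitionBusGraph s),
      (R.bus none).hi - (R.bus none).lo = (T : ℤ) - 1 ∧
      ∀ a, (R.bus (some a)).hi - (R.bus (some a)).lo = (s a : ℤ) - 1 := by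
  have hconn : ∀ a b (i : Fin (s a)) (j : Fin (s b)), σ a = σ b →
      base a + (i : ℕ) = base b + (j : ℕ) → (⟨a, i⟩ : (a : α) × Fin (s a)) = ⟨b, j⟩ := by
    intro a b i j hσab hx
    have hi := i.isLt
    have hj := j.isLt
    obtain rfl := hdisj a b hσab (base a + (i : ℕ)) (by omega) (by omega) (by omega) (by omega)
    obtain rfl : i = j := Fin.ext (by omega)
    rfl
  refine ⟨{
      bus := fun o => o.elim ⟨true, 0, 0, T - 1⟩ fun a => ⟨true, 2 * σ a, base a, base a + s a - 1⟩
      conn := fun c => (base c.1 + (c.2 : ℕ), σ c.1)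
      bus_disjoint := ?_, conn_inj := ?_, conn_off_bus := ?_, edge_foot := ?_,
      edge_avoids_bus := ?_, edge_avoids_conn := ?_ }, by simp, fun a => by simp; ring⟩
  · rintro (_ | a) (_ | b) hne <;> refine Set.disjoint_left.2 fun p hp hp' => ?_ <;>
      simp [GridSeg.pts] at hp hp'
    · exact hne rfl
    · have := hσ b; omega
    · have := hσ a; omega
    · exact hne (congrArg some (hdisj a b (by omega) p.1 (by omega) (by omega) (by omega)
        (by omega)))
  · rintro ⟨a, i⟩ ⟨b, j⟩ h
    simp only [Prod.mk.injEq] at h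
    exact hconn a b i j h.2 h.1
  · rintro ⟨a, i⟩ (_ | b) h <;> simp [GridSeg.pts] at h
    · have := hσ a; omega
    · have := hσ a; have := hσ b; omega
  · rintro ⟨a, i⟩ b hb
    have := hbase a
    have := i.isLt
    simp only [Finset.mem_insert, Finset.mem_singleton] at hb
    rcases hb with rfl | rfl
    · simp [foot, GridSeg.pts]
    · simp [foot, GridSeg.pts]; omega
  · rintro ⟨a, i⟩ b hb (_ | b') p hp hp' <;>
      simp only [Finset.mem_insert, Finset.mem_singleton] at hb <;>
      rcases hb with rfl | rfl <;> simp [edgePts, GridSeg.pts] at hp hp' ⊢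
    all_goals have := hσ a; have := i.isLt
    · omega
    · have := hσ b'
      exact hdisj b' a (by omega) p.1 (by omega) (by omega) (by omega) (by omega)
    · have := hσ b'; omega
  · rintro ⟨a, i⟩ b hb ⟨b', j⟩ h
    simp only [Finset.mem_insert, Finset.mem_singleton] at hb
    rcases hb with rfl | rfl <;> simp [edgePts] at h <;>
      exact hconn b' a j i (by have := hσ a; have := hσ b'; omega) h.1

lemma exists_realization_of_equal_partition [Fintype α] {T : ℕ} (htot : ∑ a, s a = 2 * T)
    {A' : Finset α} (hA' : ∑ a ∈ A', s a = ∑ a ∈ A'ᶜ, s a) :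
    ∃ R : Realization (partitionBusGraph s),
      (R.bus none).hi - (R.bus none).lo = (T : ℤ) - 1 ∧
      ∀ a, (R.bus (some a)).hi - (R.bus (some a)).lo = (s a : ℤ) - 1 := by
  have hsplit := Finset.sum_add_sum_compl A' s
  obtain ⟨base₁, hle₁, hdisj₁⟩ := Finset.exists_pairwiseDisjoint_Ico s A'
  obtain ⟨base₂, hle₂, hdisj₂⟩ := Finset.exists_pairwiseDisjoint_Ico s A'ᶜ
  let σ : α → ℤ := fun a => if a ∈ A' then 1 else -1
  let base : α → ℤ := fun a => if a ∈ A' then base₁ a else base₂ a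
  refine exists_realization_of_sides T σ base (fun a => ?_) (fun a => ?_)
    fun a b hσab x hax hax' hbx hbx' => ?_
  · by_cases ha : a ∈ A' <;> simp [σ, ha]
  · by_cases ha : a ∈ A'
    · have := hle₁ a ha
      simp only [base, ha, if_true]
      omega
    · have := hle₂ a (Finset.mem_compl.2 ha)
      simp only [base, ha, if_false]
      omega
  · by_cases ha : a ∈ A' <;> by_cases hb : b ∈ A' <;> simp [σ, ha, hb] at hσab <;>
      simp only [base, ha, hb, if_true, if_false] at hax hax' hbx hbx'
    · exact hdisj₁.elim_finset ha hb x.toNat (by simp; omega) (by simp; omega)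
    · exact hdisj₂.elim_finset (Finset.mem_compl.2 ha) (Finset.mem_compl.2 hb) x.toNat
        (by simp; omega) (by simp; omega)

end PartitionBusGraph

theorem partition_reduction_correct_general
    {α : Type} [Fintype α] [DecidableEq α]
    (s : α → ℕ) (T : ℕ)
    (htot : ∑ a, s a = 2 * T) :
    (∃ R : Realization (fun c : (a : α) × Fin (s a) =>
        ({some c.1, none} : Finset (Option α))),
      (R.bus none).hi - (R.bus none).lo = (T : ℤ) - 1 ∧
      ∀ a : α, (R.bus (some a)).hi - (R.bus (some a)).lo = (s a : ℤ) - 1)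
    ↔ (∃ A' : Finset α, ∑ a ∈ A', s a = ∑ a ∈ A'ᶜ, s a) :=
  ⟨fun ⟨R, hlen₀, hlen⟩ => exists_equal_partition_of_realization htot R hlen₀ hlen,
    fun ⟨_, hA'⟩ => exists_realization_of_equal_partition htot hA'⟩

/-- The bus graph constructed from a PARTITION instance ⟨A, s⟩ (a central bus
B* of length (1/2)·Σ s(a) − 1 = T − 1, and for each a ∈ A a bus B_a of length
s(a) − 1 joined to B* by s(a) connectors) is realizable on the grid iff A can
be partitioned into two parts of equal total size. -/
theorem partition_reduction_correct
    {α : Type} [Fintype α] [DecidableEq α]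
    (s : α → ℕ) (hs : ∀ a, 2 ≤ s a) (T : ℕ)
    (htot : ∑ a, s a = 2 * T) :
    (∃ R : Realization (fun c : (a : α) × Fin (s a) =>
        ({some c.1, none} : Finset (Option α))),
      (R.bus none).hi - (R.bus none).lo = (T : ℤ) - 1 ∧
      ∀ a : α, (R.bus (some a)).hi - (R.bus (some a)).lo = (s a : ℤ) - 1)
    ↔ (∃ A' : Finset α, ∑ a ∈ A', s a = ∑ a ∈ A'ᶜ, s a) :=
  partition_reduction_correct_general s T htot
end

section
/- Suppose A can be partitioned into A' and A ∖ A' with Σ_{a∈A'} s(a) = Σ_{a∉A'} s(a) = (1/2)Σ_{a∈A} s(a). Then placing B* as the horizontal segment from (0,0) to ((1/2)Σ s(a) − 1, 0), the buses {B_a : a ∈ A'} consecutively along the line y = 1, and the buses {B_a : a ∉ A'} consecutively along the line y = −1, with each grid point of each B_a joined to B* by a unit vertical edge through a connector placed at that grid point of B_a, yields a valid realization: all buses are disjoint, all connectors distinct, and every edge is perpendicular to B* and interior-disjoint from all buses and connectors other than its endpoints. -/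
/-! All buses are horizontal, so every edge is a vertical segment at the `x`-coordinate of its
connector, from height `±1` to height `0` (for `B*`) or `±2` (for `B_a`). Heights alone separate
`B*`, the connectors and the two rows of buses; within a row the buses occupy disjoint ranges of
`x`-coordinates, so a point of a row determines its bus, and a connector is determined by its
side and its `x`-coordinate. -/

theorem foot_of_horiz {s : GridSeg} (h : s.horiz = true) (c : ℤ × ℤ) :
    foot c s = (c.1, s.coord) := by
  simp [foot, h]

theorem GridSeg.mem_pts_of_horiz_s12 {s : GridSeg} (h : s.horiz = true) {p : ℤ × ℤ} :
    p ∈ s.pts ↔ p.2 = s.coord ∧ s.lo ≤ p.1 ∧ p.1 ≤ s.hi := by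
  simp [GridSeg.pts, h]

theorem mem_edgePts_of_horiz {s : GridSeg} (h : s.horiz = true) {c p : ℤ × ℤ} :
    p ∈ edgePts c s ↔ p.1 = c.1 ∧ min c.2 s.coord ≤ p.2 ∧ p.2 ≤ max c.2 s.coord := by
  simp [edgePts, h]

namespace PartitionLayout

variable {α : Type} [DecidableEq α] (A' : Finset α) (s off : α → ℕ) (T : ℕ)

/-- The buses of `A'` lie on the side `y > 0` of `B*`, the others on the side `y < 0`. -/
def side (a : α) : ℤ := if a ∈ A' then 1 else -1

/-- `none` is the bus `B*` and `some a` is `B_a`. -/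
def bus : Option α → GridSeg
  | none => ⟨true, 0, 0, (T : ℤ) - 1⟩
  | some a => ⟨true, 2 * side A' a, off a, (off a : ℤ) + s a - 1⟩

def conn (c : (a : α) × Fin (s a)) : ℤ × ℤ :=
  ((off c.1 : ℤ) + c.2, side A' c.1)

def SidesNonOverlapping : Prop :=
  ∀ a b : α, a ≠ b → (a ∈ A' ↔ b ∈ A') →
    off a + s a ≤ off b ∨ off b + s b ≤ off a

variable {A' s off T}

theorem side_eq_or (A' : Finset α) (a : α) : side A' a = 1 ∨ side A' a = -1 := by
  unfold side; split_ifs <;> simp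

theorem side_eq_side_iff {a b : α} : side A' a = side A' b ↔ (a ∈ A' ↔ b ∈ A') := by
  unfold side; split_ifs <;> simp_all

theorem two_mul_side (a : α) : 2 * side A' a = if a ∈ A' then 2 else -2 := by
  unfold side; split_ifs <;> rfl

theorem bus_horiz (b : Option α) : (bus A' s off T b).horiz = true := by
  cases b <;> rfl

theorem bus_none_coord : (bus A' s off T none).coord = 0 := rfl

theorem bus_some_coord (a : α) : (bus A' s off T (some a)).coord = 2 * side A' a := rfl

theorem mem_bus_none {p : ℤ × ℤ} :
    p ∈ (bus A' s off T none).pts ↔ p.2 = 0 ∧ 0 ≤ p.1 ∧ p.1 < T := by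
  rw [GridSeg.mem_pts_of_horiz_s12 (bus_horiz _)]
  simp only [bus]
  omega

theorem mem_bus_some {a : α} {p : ℤ × ℤ} :
    p ∈ (bus A' s off T (some a)).pts ↔
      p.2 = 2 * side A' a ∧ off a ≤ p.1 ∧ p.1 < off a + s a := by
  rw [GridSeg.mem_pts_of_horiz_s12 (bus_horiz _)]
  simp only [bus]
  omega

theorem eq_of_side_eq_of_mem (hdisj : SidesNonOverlapping A' s off)
    {a b : α} (hside : side A' a = side A' b) {x : ℤ}
    (ha : off a ≤ x ∧ x < off a + s a) (hb : off b ≤ x ∧ x < off b + s b) : a = b := by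
  by_contra hne
  have := hdisj a b hne (side_eq_side_iff.mp hside)
  omega

theorem bus_disjoint (hdisj : SidesNonOverlapping A' s off) {b b' : Option α} (hne : b ≠ b') :
    Disjoint (bus A' s off T b).pts (bus A' s off T b').pts := by
  rw [Set.disjoint_left]
  intro p hp hp'
  rcases b with _ | a <;> rcases b' with _ | a'
  · exact hne rfl
  all_goals
    simp only [mem_bus_none, mem_bus_some] at hp hp'
  · have := side_eq_or A' a'; omega
  · have := side_eq_or A' a; omega
  · exact hne (congrArg some (eq_of_side_eq_of_mem hdisj (by omega) hp.2 hp'.2))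

theorem conn_injective (hdisj : SidesNonOverlapping A' s off) :
    Function.Injective (conn A' s off) := by
  rintro ⟨a, i⟩ ⟨b, j⟩ h
  simp only [conn, Prod.mk.injEq] at h
  obtain rfl : a = b := eq_of_side_eq_of_mem hdisj h.2 (x := off a + i)
    (by omega) (by have := j.isLt; omega)
  obtain rfl : i = j := Fin.ext (by omega)
  rfl

theorem conn_not_mem_bus (c : (a : α) × Fin (s a)) (b : Option α) :
    conn A' s off c ∉ (bus A' s off T b).pts := by
  have := side_eq_or A' c.1
  rcases b with _ | a
  · simp only [mem_bus_none, conn]; omega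
  · have := side_eq_or A' a
    simp only [mem_bus_some, conn]; omega

theorem mem_edgePts_conn {c : (a : α) × Fin (s a)} {b : Option α} {p : ℤ × ℤ} :
    p ∈ edgePts (conn A' s off c) (bus A' s off T b) ↔
      p.1 = off c.1 + c.2 ∧ min (side A' c.1) (bus A' s off T b).coord ≤ p.2 ∧
        p.2 ≤ max (side A' c.1) (bus A' s off T b).coord :=
  mem_edgePts_of_horiz (bus_horiz b)

theorem foot_conn_mem_bus (hfit : ∀ a, off a + s a ≤ T) (c : (a : α) × Fin (s a))
    {b : Option α} (hb : b ∈ ({some c.1, none} : Finset (Option α))) :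
    foot (conn A' s off c) (bus A' s off T b) ∈ (bus A' s off T b).pts := by
  have := c.2.isLt
  have := hfit c.1
  rw [foot_of_horiz (bus_horiz b)]
  rcases Finset.mem_insert.mp hb with rfl | hb
  · simp only [mem_bus_some, conn, bus_some_coord, true_and]; omega
  · rw [Finset.mem_singleton.mp hb]
    simp only [mem_bus_none, conn, bus_none_coord, true_and]; omega

theorem edgePts_conn_avoids_bus (hdisj : SidesNonOverlapping A' s off)
    (c : (a : α) × Fin (s a)) {b : Option α} (hb : b ∈ ({some c.1, none} : Finset (Option α)))
    (b' : Option α) {p : ℤ × ℤ} (hp : p ∈ edgePts (conn A' s off c) (bus A' s off T b))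
    (hp' : p ∈ (bus A' s off T b').pts) : b' = b := by
  have := c.2.isLt
  have := side_eq_or A' c.1
  rw [mem_edgePts_conn] at hp
  rcases Finset.mem_insert.mp hb with rfl | hb <;>
    [skip; rw [Finset.mem_singleton.mp hb] at hp ⊢] <;>
    rcases b' with _ | a' <;>
    simp only [mem_bus_none, mem_bus_some, bus_none_coord, bus_some_coord] at hp hp'
  · omega
  · have := side_eq_or A' a'
    exact congrArg some (eq_of_side_eq_of_mem hdisj (by omega) hp'.2 (by omega))
  · rfl
  · have := side_eq_or A' a'; omega

theorem edgePts_conn_avoids_conn (hdisj : SidesNonOverlapping A' s off)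
    (c : (a : α) × Fin (s a)) {b : Option α} (hb : b ∈ ({some c.1, none} : Finset (Option α)))
    (c' : (a : α) × Fin (s a))
    (hc' : conn A' s off c' ∈ edgePts (conn A' s off c) (bus A' s off T b)) : c' = c := by
  have := side_eq_or A' c.1
  have := side_eq_or A' c'.1
  rw [mem_edgePts_conn] at hc'
  apply conn_injective hdisj
  rcases Finset.mem_insert.mp hb with rfl | hb <;>
    [skip; rw [Finset.mem_singleton.mp hb] at hc'] <;>
    simp only [conn, bus_none_coord, bus_some_coord, Prod.mk.injEq] at hc' ⊢ <;> omega

def realization (hfit : ∀ a, off a + s a ≤ T) (hdisj : SidesNonOverlapping A' s off) :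
    Realization (fun c : (a : α) × Fin (s a) => ({some c.1, none} : Finset (Option α))) where
  bus := bus A' s off T
  conn := conn A' s off
  bus_disjoint _ _ := bus_disjoint hdisj
  conn_inj := conn_injective hdisj
  conn_off_bus := conn_not_mem_bus
  edge_foot := foot_conn_mem_bus hfit
  edge_avoids_bus c _ hb b' _ := edgePts_conn_avoids_bus hdisj c hb b'
  edge_avoids_conn c _ hb := edgePts_conn_avoids_conn hdisj c hb

end PartitionLayout

theorem partition_layout_is_realization_general
    {α : Type} [DecidableEq α]
    (s : α → ℕ) (T : ℕ)
    (A' : Finset α)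
    (off : α → ℕ)
    (hfit : ∀ a, off a + s a ≤ T)
    (hdisj : ∀ a b : α, a ≠ b → (a ∈ A' ↔ b ∈ A') →
      off a + s a ≤ off b ∨ off b + s b ≤ off a) :
    ∃ R : Realization (fun c : (a : α) × Fin (s a) =>
        ({some c.1, none} : Finset (Option α))),
      R.bus none = ⟨true, 0, 0, (T : ℤ) - 1⟩ ∧
      (∀ a : α, R.bus (some a) =
        ⟨true, if a ∈ A' then 2 else -2, (off a : ℤ),
          (off a : ℤ) + (s a : ℤ) - 1⟩) ∧
      (∀ c : (a : α) × Fin (s a),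
        R.conn c = ((off c.1 : ℤ) + (c.2 : ℤ),
          if c.1 ∈ A' then (1 : ℤ) else -1)) :=
  ⟨PartitionLayout.realization hfit hdisj, rfl,
    fun _ => by
      simp [PartitionLayout.realization, PartitionLayout.bus, PartitionLayout.two_mul_side],
    fun _ => rfl⟩

/-- Given an equal-sum partition A' of the PARTITION instance, the explicit
layout — B* as the horizontal segment from (0,0) to (T−1, 0); each B_a for
a ∈ A' horizontal along y = 2 and each B_a for a ∉ A' horizontal along
y = −2, placed consecutively (at pairwise non-overlapping offsets `off`
within [0, T]); and, for each grid point of each B_a, a connector directly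
between B_a and B* (at y = 1, resp. y = −1) joined by unit vertical edges to
both — is a valid grid realization. -/
theorem partition_layout_is_realization
    {α : Type} [Fintype α] [DecidableEq α]
    (s : α → ℕ) (hs : ∀ a, 2 ≤ s a) (T : ℕ)
    (htot : ∑ a, s a = 2 * T)
    (A' : Finset α)
    (hsum : ∑ a ∈ A', s a = T ∧ ∑ a ∈ A'ᶜ, s a = T)
    (off : α → ℕ)
    (hfit : ∀ a, off a + s a ≤ T)
    (hdisj : ∀ a b : α, a ≠ b → (a ∈ A' ↔ b ∈ A') →
      off a + s a ≤ off b ∨ off b + s b ≤ off a) :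
    ∃ R : Realization (fun c : (a : α) × Fin (s a) =>
        ({some c.1, none} : Finset (Option α))),
      R.bus none = ⟨true, 0, 0, (T : ℤ) - 1⟩ ∧
      (∀ a : α, R.bus (some a) =
        ⟨true, if a ∈ A' then 2 else -2, (off a : ℤ),
          (off a : ℤ) + (s a : ℤ) - 1⟩) ∧
      (∀ c : (a : α) × Fin (s a),
        R.conn c = ((off c.1 : ℤ) + (c.2 : ℤ),
          if c.1 ∈ A' then (1 : ℤ) else -1)) :=
  partition_layout_is_realization_general s T A' off hfit hdisj
end

section
/- If a bus graph G = (B, C; E) admits a grid realization, then it admits a realization in which all event points (connectors and bus endpoints) have coordinates in {0, 1, ..., N−1} × {0, 1, ..., N−1}, where N = |C| + 2|B| is the total number of event points. Consequently, Bus Graph Realizability is in NP. -/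
open Set Function

namespace Finset

variable {α : Type*} [LinearOrder α] (S : Finset α)

def rank (a : α) : ℕ := #{x ∈ S | x < a}

theorem rank_mono : Monotone S.rank := fun _ _ hab =>
  card_le_card (monotone_filter_right S fun _ _ hx => hx.trans_le hab)

theorem rank_strictMonoOn : StrictMonoOn S.rank S := fun a ha _ _ hab =>
  card_lt_card ⟨monotone_filter_right S fun _ _ hx => hx.trans hab,
    fun hsub => lt_irrefl a (mem_filter.1 (hsub (mem_filter.2 ⟨ha, hab⟩))).2⟩

theorem rank_lt_card {a : α} (ha : a ∈ S) : S.rank a < #S :=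
  card_lt_card (filter_ssubset.2 ⟨a, ha, lt_irrefl a⟩)

end Finset

section LinearOrder

variable {α β γ δ : Type*} [LinearOrder α] [LinearOrder β] [LinearOrder γ] [LinearOrder δ]
  {f : α → β} {g : γ → δ}

def Monotone.prodMapLatticeHom (hf : Monotone f) (hg : Monotone g) :
    LatticeHom (α × γ) (β × δ) where
  toFun := Prod.map f g
  map_sup' _ _ := Prod.ext hf.map_max hg.map_max
  map_inf' _ _ := Prod.ext hf.map_min hg.map_min

@[simp]
theorem Monotone.coe_prodMapLatticeHom (hf : Monotone f) (hg : Monotone g) :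
    ⇑(hf.prodMapLatticeHom hg) = Prod.map f g :=
  rfl

theorem Prod.map_le_map_iff_of_strictMonoOn {X : Set α} {Y : Set γ} (hf : StrictMonoOn f X)
    (hg : StrictMonoOn g Y) {x y : α × γ} (hx : x ∈ X ×ˢ Y) (hy : y ∈ X ×ˢ Y) :
    Prod.map f g x ≤ Prod.map f g y ↔ x ≤ y := by
  simp only [Prod.le_def, Prod.map_fst, Prod.map_snd, hf.le_iff_le hx.1 hy.1,
    hg.le_iff_le hx.2 hy.2]

end LinearOrder

theorem map_mem_Icc_iff_of_le_iff_le {α β : Type*} [Preorder α] [Preorder β] {T : Set α}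
    {F : α → β} (hF : ∀ x ∈ T, ∀ y ∈ T, F x ≤ F y ↔ x ≤ y) {x a b : α} (hx : x ∈ T) (ha : a ∈ T)
    (hb : b ∈ T) : F x ∈ Icc (F a) (F b) ↔ x ∈ Icc a b := by
  rw [mem_Icc, mem_Icc, hF a ha x hx, hF x hx b hb]

section Lattice

variable {α β : Type*} [Lattice α] [Lattice β] {T : Set α}

theorem LatticeHom.Icc_inter_Icc_nonempty_iff (F : LatticeHom α β) (hT : IsSublattice T)
    (hF : ∀ x ∈ T, ∀ y ∈ T, F x ≤ F y ↔ x ≤ y) {a b c d : α} (ha : a ∈ T) (hb : b ∈ T)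
    (hc : c ∈ T) (hd : d ∈ T) :
    (Icc (F a) (F b) ∩ Icc (F c) (F d)).Nonempty ↔ (Icc a b ∩ Icc c d).Nonempty := by
  rw [Icc_inter_Icc, Icc_inter_Icc, nonempty_Icc, nonempty_Icc, ← map_sup, ← map_inf,
    hF _ (hT.supClosed ha hc) _ (hT.infClosed hb hd)]

theorem LatticeHom.uIcc_map (F : LatticeHom α β) (a b : α) :
    uIcc (F a) (F b) = Icc (F (a ⊓ b)) (F (a ⊔ b)) := by
  rw [uIcc, map_sup, map_inf]

end Lattice

namespace GridSeg

def loEnd (s : GridSeg) : ℤ × ℤ := if s.horiz then (s.lo, s.coord) else (s.coord, s.lo)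

def hiEnd (s : GridSeg) : ℤ × ℤ := if s.horiz then (s.hi, s.coord) else (s.coord, s.hi)

theorem pts_eq_Icc (s : GridSeg) : s.pts = Icc s.loEnd s.hiEnd := by
  ext p
  unfold pts loEnd hiEnd
  cases s.horiz <;> simp [Prod.le_def] <;> omega

theorem loEnd_le_hiEnd_iff (s : GridSeg) : s.loEnd ≤ s.hiEnd ↔ s.lo ≤ s.hi := by
  unfold loEnd hiEnd
  cases s.horiz <;> simp

theorem mem_Icc_of_loEnd_hiEnd_mem_Icc {s : GridSeg} {a b : ℤ}
    (hlo : s.loEnd ∈ Icc (a, a) (b, b)) (hhi : s.hiEnd ∈ Icc (a, a) (b, b)) :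
    s.lo ∈ Icc a b ∧ s.hi ∈ Icc a b ∧ s.coord ∈ Icc a b := by
  unfold loEnd at hlo
  unfold hiEnd at hhi
  cases h : s.horiz <;> simp_all [Prod.le_def]

theorem edgePts_eq_uIcc (c : ℤ × ℤ) (s : GridSeg) : edgePts c s = uIcc c (foot c s) := by
  ext p
  unfold edgePts foot
  cases s.horiz <;> simp [uIcc, Prod.le_def] <;> omega

theorem le_sup_foot_of_mem_edgePts {c p : ℤ × ℤ} {s : GridSeg} (h : p ∈ edgePts c s) :
    p ≤ c ⊔ foot c s := by
  rw [edgePts_eq_uIcc] at h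
  exact h.2

theorem foot_mem_prod {X Y : Set ℤ} {c : ℤ × ℤ} {s : GridSeg} (hc : c ∈ X ×ˢ Y)
    (hs : s.loEnd ∈ X ×ˢ Y) : foot c s ∈ X ×ˢ Y := by
  unfold loEnd at hs
  unfold foot
  cases h : s.horiz <;> simp_all [mem_prod]

def map (f g : ℤ → ℤ) (s : GridSeg) : GridSeg :=
  if s.horiz then ⟨true, g s.coord, f s.lo, f s.hi⟩ else ⟨false, f s.coord, g s.lo, g s.hi⟩

section Map

variable (f g : ℤ → ℤ) (s : GridSeg)

theorem loEnd_map : (s.map f g).loEnd = Prod.map f g s.loEnd := by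
  unfold map loEnd
  cases s.horiz <;> rfl

theorem hiEnd_map : (s.map f g).hiEnd = Prod.map f g s.hiEnd := by
  unfold map hiEnd
  cases s.horiz <;> rfl

theorem foot_map (c : ℤ × ℤ) : foot (Prod.map f g c) (s.map f g) = Prod.map f g (foot c s) := by
  unfold map foot
  cases s.horiz <;> rfl

theorem pts_map : (s.map f g).pts = Icc (Prod.map f g s.loEnd) (Prod.map f g s.hiEnd) := by
  rw [pts_eq_Icc, loEnd_map, hiEnd_map]

theorem edgePts_map (c : ℤ × ℤ) :
    edgePts (Prod.map f g c) (s.map f g) = uIcc (Prod.map f g c) (Prod.map f g (foot c s)) := by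
  rw [edgePts_eq_uIcc, foot_map]

variable {f g} in
theorem map_lo_le_hi (hf : Monotone f) (hg : Monotone g) {s : GridSeg} (h : s.lo ≤ s.hi) :
    (s.map f g).lo ≤ (s.map f g).hi := by
  rw [← loEnd_le_hiEnd_iff, loEnd_map, hiEnd_map]
  exact hf.prodMap hg ((loEnd_le_hiEnd_iff s).2 h)

end Map

end GridSeg

namespace Realization

open scoped Finset

section Park

variable {B C : Type} {adj : C → Finset B}

def parkBus (R : Realization adj) (i : B → ℤ) (M : ℤ) (b : B) : GridSeg :=
  if (R.bus b).lo ≤ (R.bus b).hi then R.bus b else ⟨true, M, i b, i b⟩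

variable {R : Realization adj} {i : B → ℤ} {M : ℤ}

theorem mem_parkBus_pts {b : B} {p : ℤ × ℤ} :
    p ∈ (R.parkBus i M b).pts ↔ p ∈ (R.bus b).pts ∨ (R.bus b).hi < (R.bus b).lo ∧ p = (i b, M) := by
  unfold parkBus
  split_ifs with h
  · simp [h]
  · rw [GridSeg.pts_eq_Icc (R.bus b), Icc_eq_empty (mt (GridSeg.loEnd_le_hiEnd_iff _).1 h)]
    simp [GridSeg.pts, Prod.ext_iff, not_le.1 h]
    omega

theorem parkBus_lo_le_hi (b : B) : (R.parkBus i M b).lo ≤ (R.parkBus i M b).hi := by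
  unfold parkBus
  split_ifs with h
  · exact h
  · exact le_rfl

theorem lo_le_hi_of_mem_adj {c : C} {b : B} (hb : b ∈ adj c) : (R.bus b).lo ≤ (R.bus b).hi := by
  rw [← GridSeg.loEnd_le_hiEnd_iff, ← nonempty_Icc, ← GridSeg.pts_eq_Icc]
  exact ⟨_, R.edge_foot c b hb⟩

theorem parkBus_of_mem_adj {c : C} {b : B} (hb : b ∈ adj c) : R.parkBus i M b = R.bus b :=
  if_pos (lo_le_hi_of_mem_adj hb)

variable (R) in
/-- A bus with `hi < lo` is drawn as the empty set and carries no edge, so it can be moved to a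
private grid point `(i b, M)` above the rest of the drawing. -/
def park (hi : Injective i) (hconn : ∀ c, (R.conn c).2 < M)
    (hbus : ∀ b, ∀ p ∈ (R.bus b).pts, p.2 < M) : Realization adj where
  bus := R.parkBus i M
  conn := R.conn
  bus_disjoint b b' hne := by
    refine Set.disjoint_left.2 fun p hp hp' => ?_
    rcases mem_parkBus_pts.1 hp with hp | ⟨-, rfl⟩ <;>
      rcases mem_parkBus_pts.1 hp' with hp' | ⟨-, hp'⟩
    · exact Set.disjoint_left.1 (R.bus_disjoint b b' hne) hp hp'
    · exact (hbus b p hp).ne (congrArg Prod.snd hp')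
    · exact (hbus b' _ hp').ne rfl
    · exact hne (hi (congrArg Prod.fst hp'))
  conn_inj := R.conn_inj
  conn_off_bus c b h := by
    rcases mem_parkBus_pts.1 h with h | ⟨-, h⟩
    · exact R.conn_off_bus c b h
    · exact (hconn c).ne (congrArg Prod.snd h)
  edge_foot c b hb := by
    rw [parkBus_of_mem_adj hb]
    exact R.edge_foot c b hb
  edge_avoids_bus c b hb b' p hp hp' := by
    rw [parkBus_of_mem_adj hb] at hp
    rcases mem_parkBus_pts.1 hp' with hp' | ⟨-, rfl⟩
    · exact R.edge_avoids_bus c b hb b' p hp hp'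
    · have hle : M ≤ max (R.conn c).2 (foot (R.conn c) (R.bus b)).2 :=
        (GridSeg.le_sup_foot_of_mem_edgePts hp).2
      exact absurd hle (not_le.2 (max_lt (hconn c) (hbus b _ (R.edge_foot c b hb))))
  edge_avoids_conn c b hb c' h := by
    rw [parkBus_of_mem_adj hb] at h
    exact R.edge_avoids_conn c b hb c' h

end Park

section Events

variable {B C : Type} [Fintype B] [Fintype C] {adj : C → Finset B} (R : Realization adj)

def events : Finset (ℤ × ℤ) :=
  Finset.univ.image R.conn ∪ Finset.univ.image (fun b => (R.bus b).loEnd) ∪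
    Finset.univ.image (fun b => (R.bus b).hiEnd)

theorem conn_mem_events (c : C) : R.conn c ∈ R.events := by simp [events]

theorem loEnd_mem_events (b : B) : (R.bus b).loEnd ∈ R.events := by simp [events]

theorem hiEnd_mem_events (b : B) : (R.bus b).hiEnd ∈ R.events := by simp [events]

theorem card_events_le : #R.events ≤ Fintype.card C + 2 * Fintype.card B := by
  unfold events
  grw [Finset.card_union_le, Finset.card_union_le, Finset.card_image_le, Finset.card_image_le,
    Finset.card_image_le]
  simp only [Finset.card_univ]
  omega

def eventGrid : Set (ℤ × ℤ) :=
  (R.events.image Prod.fst : Set ℤ) ×ˢ (R.events.image Prod.snd : Set ℤ)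

theorem isSublattice_eventGrid : IsSublattice R.eventGrid :=
  (LinearOrder.isSublattice _).prod (LinearOrder.isSublattice _)

theorem mem_eventGrid_of_mem_events {p : ℤ × ℤ} (hp : p ∈ R.events) : p ∈ R.eventGrid :=
  ⟨Finset.mem_coe.2 (Finset.mem_image_of_mem _ hp), Finset.mem_coe.2 (Finset.mem_image_of_mem _ hp)⟩

theorem conn_mem_eventGrid (c : C) : R.conn c ∈ R.eventGrid :=
  R.mem_eventGrid_of_mem_events (R.conn_mem_events c)

theorem loEnd_mem_eventGrid (b : B) : (R.bus b).loEnd ∈ R.eventGrid :=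
  R.mem_eventGrid_of_mem_events (R.loEnd_mem_events b)

theorem hiEnd_mem_eventGrid (b : B) : (R.bus b).hiEnd ∈ R.eventGrid :=
  R.mem_eventGrid_of_mem_events (R.hiEnd_mem_events b)

theorem foot_mem_eventGrid (c : C) (b : B) : foot (R.conn c) (R.bus b) ∈ R.eventGrid :=
  GridSeg.foot_mem_prod (R.conn_mem_eventGrid c) (R.loEnd_mem_eventGrid b)

end Events

theorem exists_forall_lo_le_hi {B C : Type} [Fintype B] [Fintype C] {adj : C → Finset B}
    (R : Realization adj) : ∃ R' : Realization adj, ∀ b, (R'.bus b).lo ≤ (R'.bus b).hi := by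
  obtain ⟨M, hM⟩ := (R.events.image Prod.snd).exists_le
  have hsnd {p : ℤ × ℤ} (hp : p ∈ R.events) : p.2 < M + 1 :=
    Int.lt_add_one_of_le (hM _ (Finset.mem_image_of_mem _ hp))
  have hi : Injective fun b => ((Fintype.equivFin B b : ℕ) : ℤ) :=
    Nat.cast_injective.comp (Fin.val_injective.comp (Fintype.equivFin B).injective)
  refine ⟨R.park hi (fun c => hsnd (R.conn_mem_events c)) (fun b p hp => ?_),
    fun _ => parkBus_lo_le_hi _⟩
  rw [GridSeg.pts_eq_Icc] at hp
  exact hp.2.2.trans_lt (hsnd (R.hiEnd_mem_events b))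

section Map

variable {B C : Type} [Fintype B] [Fintype C] {adj : C → Finset B}

def map (R : Realization adj) {f g : ℤ → ℤ} (hf : Monotone f) (hg : Monotone g)
    (hfX : StrictMonoOn f (R.events.image Prod.fst))
    (hgY : StrictMonoOn g (R.events.image Prod.snd)) : Realization adj :=
  let F := hf.prodMapLatticeHom hg
  have hF : ∀ x ∈ R.eventGrid, ∀ y ∈ R.eventGrid, F x ≤ F y ↔ x ≤ y := fun _ hx _ hy =>
    Prod.map_le_map_iff_of_strictMonoOn hfX hgY hx hy
  have hpts (b : B) : ((R.bus b).map f g).pts = Icc (F (R.bus b).loEnd) (F (R.bus b).hiEnd) :=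
    GridSeg.pts_map f g _
  have hedge (c : C) (b : B) : edgePts (F (R.conn c)) ((R.bus b).map f g) =
      Icc (F (R.conn c ⊓ foot (R.conn c) (R.bus b)))
        (F (R.conn c ⊔ foot (R.conn c) (R.bus b))) := by
    rw [← F.uIcc_map]
    exact GridSeg.edgePts_map f g _ _
  have hinf (c : C) (b : B) := R.isSublattice_eventGrid.infClosed (R.conn_mem_eventGrid c)
    (R.foot_mem_eventGrid c b)
  have hsup (c : C) (b : B) := R.isSublattice_eventGrid.supClosed (R.conn_mem_eventGrid c)
    (R.foot_mem_eventGrid c b)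
  { bus := fun b => (R.bus b).map f g
    conn := fun c => F (R.conn c)
    bus_disjoint := fun b b' hne => by
      rw [hpts, hpts, Set.disjoint_iff_inter_eq_empty, ← not_nonempty_iff_eq_empty,
        F.Icc_inter_Icc_nonempty_iff R.isSublattice_eventGrid hF (R.loEnd_mem_eventGrid b)
          (R.hiEnd_mem_eventGrid b) (R.loEnd_mem_eventGrid b') (R.hiEnd_mem_eventGrid b'),
        not_nonempty_iff_eq_empty, ← Set.disjoint_iff_inter_eq_empty, ← GridSeg.pts_eq_Icc,
        ← GridSeg.pts_eq_Icc]
      exact R.bus_disjoint b b' hne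
    conn_inj := fun c c' h => R.conn_inj <| le_antisymm
      ((hF _ (R.conn_mem_eventGrid c) _ (R.conn_mem_eventGrid c')).1 h.le)
      ((hF _ (R.conn_mem_eventGrid c') _ (R.conn_mem_eventGrid c)).1 h.ge)
    conn_off_bus := fun c b => by
      rw [hpts, map_mem_Icc_iff_of_le_iff_le hF (R.conn_mem_eventGrid c)
        (R.loEnd_mem_eventGrid b) (R.hiEnd_mem_eventGrid b), ← GridSeg.pts_eq_Icc]
      exact R.conn_off_bus c b
    edge_foot := fun c b hb => by
      rw [show foot (F (R.conn c)) ((R.bus b).map f g) = F (foot (R.conn c) (R.bus b)) from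
        GridSeg.foot_map f g _ _, hpts, map_mem_Icc_iff_of_le_iff_le hF (R.foot_mem_eventGrid c b)
        (R.loEnd_mem_eventGrid b) (R.hiEnd_mem_eventGrid b), ← GridSeg.pts_eq_Icc]
      exact R.edge_foot c b hb
    edge_avoids_bus := fun c b hb b' p hp hp' => by
      have hne : (edgePts (F (R.conn c)) ((R.bus b).map f g) ∩ ((R.bus b').map f g).pts).Nonempty :=
        ⟨p, hp, hp'⟩
      rw [hedge, hpts, F.Icc_inter_Icc_nonempty_iff R.isSublattice_eventGrid hF (hinf c b)
        (hsup c b) (R.loEnd_mem_eventGrid b') (R.hiEnd_mem_eventGrid b'), ← uIcc,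
        ← GridSeg.edgePts_eq_uIcc, ← GridSeg.pts_eq_Icc] at hne
      obtain ⟨q, hq, hq'⟩ := hne
      exact R.edge_avoids_bus c b hb b' q hq hq'
    edge_avoids_conn := fun c b hb c' h => by
      rw [hedge, map_mem_Icc_iff_of_le_iff_le hF (R.conn_mem_eventGrid c') (hinf c b) (hsup c b),
        ← uIcc, ← GridSeg.edgePts_eq_uIcc] at h
      exact R.edge_avoids_conn c b hb c' h }

theorem events_map (R : Realization adj) {f g : ℤ → ℤ} (hf : Monotone f) (hg : Monotone g)
    (hfX : StrictMonoOn f (R.events.image Prod.fst))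
    (hgY : StrictMonoOn g (R.events.image Prod.snd)) :
    (R.map hf hg hfX hgY).events = R.events.image (Prod.map f g) := by
  simp only [events, Finset.image_union, Finset.image_image]
  simp [map, Function.comp_def, GridSeg.loEnd_map, GridSeg.hiEnd_map]

end Map

section Compact

variable {B C : Type} [Fintype B] [Fintype C] {adj : C → Finset B} (R : Realization adj)

def compact : Realization adj :=
  R.map (f := fun x => ((R.events.image Prod.fst).rank x : ℤ))
    (g := fun y => ((R.events.image Prod.snd).rank y : ℤ))
    (Nat.mono_cast.comp (Finset.rank_mono _)) (Nat.mono_cast.comp (Finset.rank_mono _))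
    (Nat.strictMono_cast.comp_strictMonoOn (Finset.rank_strictMonoOn _))
    (Nat.strictMono_cast.comp_strictMonoOn (Finset.rank_strictMonoOn _))

theorem compact_lo_le_hi {b : B} (h : (R.bus b).lo ≤ (R.bus b).hi) :
    (R.compact.bus b).lo ≤ (R.compact.bus b).hi :=
  GridSeg.map_lo_le_hi (Nat.mono_cast.comp (Finset.rank_mono _))
    (Nat.mono_cast.comp (Finset.rank_mono _)) h

theorem mem_Icc_of_mem_events_compact {p : ℤ × ℤ} (hp : p ∈ R.compact.events) :
    p ∈ Icc (0, 0) ((#R.events : ℤ) - 1, (#R.events : ℤ) - 1) := by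
  rw [compact, events_map, Finset.mem_image] at hp
  obtain ⟨q, hq, rfl⟩ := hp
  have hx := (Finset.rank_lt_card _ (Finset.mem_image_of_mem Prod.fst hq)).trans_le
    Finset.card_image_le
  have hy := (Finset.rank_lt_card _ (Finset.mem_image_of_mem Prod.snd hq)).trans_le
    Finset.card_image_le
  simp only [mem_Icc, Prod.le_def, Prod.map_fst, Prod.map_snd]
  omega

end Compact

end Realization

/-- Compaction: if a finite bus graph admits a grid realization, then it
admits one in which all event points (connector points and bus endpoints)
have both coordinates in {0, 1, ..., N−1}, where N = |C| + 2|B| is the total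
number of event points. This yields a polynomial-size certificate, so Bus
Graph Realizability is in NP. -/
theorem compact_realization
    {B C : Type} [Fintype B] [Fintype C] (adj : C → Finset B)
    (h : Nonempty (Realization adj)) :
    ∃ R : Realization adj,
      (∀ c : C,
        0 ≤ (R.conn c).1 ∧ (R.conn c).1 ≤ (Fintype.card C + 2 * Fintype.card B : ℤ) - 1 ∧
        0 ≤ (R.conn c).2 ∧ (R.conn c).2 ≤ (Fintype.card C + 2 * Fintype.card B : ℤ) - 1) ∧
      (∀ b : B,
        0 ≤ (R.bus b).lo ∧ (R.bus b).lo ≤ (R.bus b).hi ∧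
        (R.bus b).hi ≤ (Fintype.card C + 2 * Fintype.card B : ℤ) - 1 ∧
        0 ≤ (R.bus b).coord ∧
        (R.bus b).coord ≤ (Fintype.card C + 2 * Fintype.card B : ℤ) - 1) := by
  obtain ⟨R₀⟩ := h
  obtain ⟨R, hR⟩ := R₀.exists_forall_lo_le_hi
  have hN : (R.events.card : ℤ) ≤ Fintype.card C + 2 * Fintype.card B := by
    exact_mod_cast R.card_events_le
  have hbox {p : ℤ × ℤ} (hp : p ∈ R.compact.events) :
      p ∈ Icc (0, 0) ((Fintype.card C + 2 * Fintype.card B : ℤ) - 1,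
        (Fintype.card C + 2 * Fintype.card B : ℤ) - 1) :=
    Icc_subset_Icc_right (Prod.mk_le_mk.2 ⟨by omega, by omega⟩)
      (R.mem_Icc_of_mem_events_compact hp)
  refine ⟨R.compact, fun c => ?_, fun b => ?_⟩
  · obtain ⟨⟨hx₀, hy₀⟩, hx₁, hy₁⟩ := hbox (R.compact.conn_mem_events c)
    exact ⟨hx₀, hx₁, hy₀, hy₁⟩
  · obtain ⟨hlo, hhi, hcoord⟩ := GridSeg.mem_Icc_of_loEnd_hiEnd_mem_Icc
      (hbox (R.compact.loEnd_mem_events b)) (hbox (R.compact.hiEnd_mem_events b))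
    exact ⟨hlo.1, R.compact_lo_le_hi (hR b), hhi.2, hcoord.1, hcoord.2⟩
end

section
/- There exists a bus graph G with every connector of degree at most 4 that admits a valid partition of its buses by orientation (each connector adjacent to at most two buses of each orientation class) but admits no grid realization. Concretely, the bus graph obtained from the complete graph K₉ by placing a degree-2 connector on each edge admits a valid orientation partition but is not realizable. -/
/-- The bus graph obtained from K₉ by placing a degree-2 connector on each
edge: buses B₀,...,B₈ and, for each pair i < j, a connector adjacent to
exactly {Bᵢ, Bⱼ}. -/
def adjK9 : {p : Fin 9 × Fin 9 // p.1 < p.2} → Finset (Fin 9) :=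
  fun c => {c.val.1, c.val.2}

/-- Interval combinatorics lemma: five intervals with "visibility between
consecutive-in-order pairs avoiding intermediate intervals" are impossible. -/
lemma no5 (lo hi y : Fin 5 → ℤ) (x : Fin 5 → Fin 5 → ℤ)
    (hmono : ∀ i j : Fin 5, i < j → y i < y j)
    (h1 : ∀ i j : Fin 5, i ≠ j →
      lo i ≤ x i j ∧ x i j ≤ hi i ∧ lo j ≤ x i j ∧ x i j ≤ hi j)
    (h2 : ∀ i j k : Fin 5, i ≠ j → k ≠ i → k ≠ j →
      min (y i) (y j) ≤ y k → y k ≤ max (y i) (y j) →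
      ¬((lo k ≤ x i j ∧ x i j ≤ hi k))) : False := by
  have y01 := hmono 0 1 (by decide)
  have y12 := hmono 1 2 (by decide)
  have y23 := hmono 2 3 (by decide)
  have y34 := hmono 3 4 (by decide)
  have a02 := h1 0 2 (by decide)
  have a24 := h1 2 4 (by decide)
  have a13 := h1 1 3 (by decide)
  have a03 := h1 0 3 (by decide)
  have a14 := h1 1 4 (by decide)
  have a12 := h1 1 2 (by decide)
  have a23 := h1 2 3 (by decide)
  have n021 := h2 0 2 1 (by decide) (by decide) (by decide) (by omega) (by omega)
  have n243 := h2 2 4 3 (by decide) (by decide) (by decide) (by omega) (by omega)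
  have n132 := h2 1 3 2 (by decide) (by decide) (by decide) (by omega) (by omega)
  have n031 := h2 0 3 1 (by decide) (by decide) (by decide) (by omega) (by omega)
  have n032 := h2 0 3 2 (by decide) (by decide) (by decide) (by omega) (by omega)
  have n142 := h2 1 4 2 (by decide) (by decide) (by decide) (by omega) (by omega)
  have n143 := h2 1 4 3 (by decide) (by decide) (by decide) (by omega) (by omega)
  omega

/-- Key geometric facts for a connector joining two horizontal buses. -/
lemma pairH {B C : Type} {adj : C → Finset B} (R : Realization adj) {c : C} {i j : B}
    (hi : i ∈ adj c) (hj : j ∈ adj c) (hij : i ≠ j)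
    (hhi : (R.bus i).horiz = true) (hhj : (R.bus j).horiz = true) :
    ((R.bus i).lo ≤ (R.conn c).1 ∧ (R.conn c).1 ≤ (R.bus i).hi) ∧
    ((R.bus j).lo ≤ (R.conn c).1 ∧ (R.conn c).1 ≤ (R.bus j).hi) ∧
    (R.bus i).coord ≠ (R.bus j).coord ∧
    (∀ k : B, k ≠ i → k ≠ j → (R.bus k).horiz = true →
      min (R.bus i).coord (R.bus j).coord ≤ (R.bus k).coord →
      (R.bus k).coord ≤ max (R.bus i).coord (R.bus j).coord →
      ¬((R.bus k).lo ≤ (R.conn c).1 ∧ (R.conn c).1 ≤ (R.bus k).hi)) := by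
  have fi := R.edge_foot c i hi
  have fj := R.edge_foot c j hj
  simp only [foot, GridSeg.pts, hhi, if_true, Set.mem_setOf_eq] at fi
  simp only [foot, GridSeg.pts, hhj, if_true, Set.mem_setOf_eq] at fj
  -- fi : (R.conn c).1, (R.bus i).coord).2 = coord ∧ lo ≤ .1 ∧ .1 ≤ hi
  have hit : ∀ b, b ∈ adj c → (R.bus b).horiz = true → ∀ k, (R.bus k).horiz = true →
      min (R.conn c).2 (R.bus b).coord ≤ (R.bus k).coord →
      (R.bus k).coord ≤ max (R.conn c).2 (R.bus b).coord →
      (R.bus k).lo ≤ (R.conn c).1 → (R.conn c).1 ≤ (R.bus k).hi → k = b := by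
    intro b hb hhb k hhk u1 u2 u3 u4
    refine R.edge_avoids_bus c b hb k ((R.conn c).1, (R.bus k).coord) ?_ ?_
    · simp only [edgePts, hhb, if_true, Set.mem_setOf_eq]
      exact ⟨trivial, u1, u2⟩
    · simp only [GridSeg.pts, hhk, if_true, Set.mem_setOf_eq]
      exact ⟨trivial, u3, u4⟩
  have off : ∀ b, (R.bus b).horiz = true → (R.bus b).lo ≤ (R.conn c).1 →
      (R.conn c).1 ≤ (R.bus b).hi → (R.conn c).2 ≠ (R.bus b).coord := by
    intro b hhb u1 u2 hcon
    exact R.conn_off_bus c b (by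
      simp only [GridSeg.pts, hhb, if_true, Set.mem_setOf_eq]
      exact ⟨hcon, u1, u2⟩)
  have ni : ¬(min (R.conn c).2 (R.bus j).coord ≤ (R.bus i).coord ∧
      (R.bus i).coord ≤ max (R.conn c).2 (R.bus j).coord) := by
    rintro ⟨u, v⟩
    exact hij (hit j hj hhj i hhi u v fi.2.1 fi.2.2)
  have nj : ¬(min (R.conn c).2 (R.bus i).coord ≤ (R.bus j).coord ∧
      (R.bus j).coord ≤ max (R.conn c).2 (R.bus i).coord) := by
    rintro ⟨u, v⟩
    exact hij (hit i hi hhi j hhj u v fj.2.1 fj.2.2).symm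
  have oi := off i hhi fi.2.1 fi.2.2
  have oj := off j hhj fj.2.1 fj.2.2
  have between : min (R.bus i).coord (R.bus j).coord < (R.conn c).2 ∧
      (R.conn c).2 < max (R.bus i).coord (R.bus j).coord := by omega
  refine ⟨⟨fi.2.1, fi.2.2⟩, ⟨fj.2.1, fj.2.2⟩, by omega, ?_⟩
  intro k hki hkj hhk hmin hmax hcon
  have hsplit : (min (R.conn c).2 (R.bus i).coord ≤ (R.bus k).coord ∧
      (R.bus k).coord ≤ max (R.conn c).2 (R.bus i).coord) ∨
      (min (R.conn c).2 (R.bus j).coord ≤ (R.bus k).coord ∧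
      (R.bus k).coord ≤ max (R.conn c).2 (R.bus j).coord) := by omega
  rcases hsplit with ⟨u, v⟩ | ⟨u, v⟩
  · exact hki (hit i hi hhi k hhk u v hcon.1 hcon.2)
  · exact hkj (hit j hj hhj k hhk u v hcon.1 hcon.2)

/-- Key geometric facts for a connector joining two vertical buses. -/
lemma pairV {B C : Type} {adj : C → Finset B} (R : Realization adj) {c : C} {i j : B}
    (hi : i ∈ adj c) (hj : j ∈ adj c) (hij : i ≠ j)
    (hhi : (R.bus i).horiz = false) (hhj : (R.bus j).horiz = false) :
    ((R.bus i).lo ≤ (R.conn c).2 ∧ (R.conn c).2 ≤ (R.bus i).hi) ∧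
    ((R.bus j).lo ≤ (R.conn c).2 ∧ (R.conn c).2 ≤ (R.bus j).hi) ∧
    (R.bus i).coord ≠ (R.bus j).coord ∧
    (∀ k : B, k ≠ i → k ≠ j → (R.bus k).horiz = false →
      min (R.bus i).coord (R.bus j).coord ≤ (R.bus k).coord →
      (R.bus k).coord ≤ max (R.bus i).coord (R.bus j).coord →
      ¬((R.bus k).lo ≤ (R.conn c).2 ∧ (R.conn c).2 ≤ (R.bus k).hi)) := by
  have fi := R.edge_foot c i hi
  have fj := R.edge_foot c j hj
  simp only [foot, GridSeg.pts, hhi, Bool.false_eq_true, if_false, Set.mem_setOf_eq] at fi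
  simp only [foot, GridSeg.pts, hhj, Bool.false_eq_true, if_false, Set.mem_setOf_eq] at fj
  have hit : ∀ b, b ∈ adj c → (R.bus b).horiz = false → ∀ k, (R.bus k).horiz = false →
      min (R.conn c).1 (R.bus b).coord ≤ (R.bus k).coord →
      (R.bus k).coord ≤ max (R.conn c).1 (R.bus b).coord →
      (R.bus k).lo ≤ (R.conn c).2 → (R.conn c).2 ≤ (R.bus k).hi → k = b := by
    intro b hb hhb k hhk u1 u2 u3 u4
    refine R.edge_avoids_bus c b hb k ((R.bus k).coord, (R.conn c).2) ?_ ?_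
    · simp only [edgePts, hhb, Bool.false_eq_true, if_false, Set.mem_setOf_eq]
      exact ⟨trivial, u1, u2⟩
    · simp only [GridSeg.pts, hhk, Bool.false_eq_true, if_false, Set.mem_setOf_eq]
      exact ⟨trivial, u3, u4⟩
  have off : ∀ b, (R.bus b).horiz = false → (R.bus b).lo ≤ (R.conn c).2 →
      (R.conn c).2 ≤ (R.bus b).hi → (R.conn c).1 ≠ (R.bus b).coord := by
    intro b hhb u1 u2 hcon
    exact R.conn_off_bus c b (by
      simp only [GridSeg.pts, hhb, Bool.false_eq_true, if_false, Set.mem_setOf_eq]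
      exact ⟨hcon, u1, u2⟩)
  have ni : ¬(min (R.conn c).1 (R.bus j).coord ≤ (R.bus i).coord ∧
      (R.bus i).coord ≤ max (R.conn c).1 (R.bus j).coord) := by
    rintro ⟨u, v⟩
    exact hij (hit j hj hhj i hhi u v fi.2.1 fi.2.2)
  have nj : ¬(min (R.conn c).1 (R.bus i).coord ≤ (R.bus j).coord ∧
      (R.bus j).coord ≤ max (R.conn c).1 (R.bus i).coord) := by
    rintro ⟨u, v⟩
    exact hij (hit i hi hhi j hhj u v fj.2.1 fj.2.2).symm
  have oi := off i hhi fi.2.1 fi.2.2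
  have oj := off j hhj fj.2.1 fj.2.2
  refine ⟨⟨fi.2.1, fi.2.2⟩, ⟨fj.2.1, fj.2.2⟩, by omega, ?_⟩
  intro k hki hkj hhk hmin hmax hcon
  have hsplit : (min (R.conn c).1 (R.bus i).coord ≤ (R.bus k).coord ∧
      (R.bus k).coord ≤ max (R.conn c).1 (R.bus i).coord) ∨
      (min (R.conn c).1 (R.bus j).coord ≤ (R.bus k).coord ∧
      (R.bus k).coord ≤ max (R.conn c).1 (R.bus j).coord) := by omega
  rcases hsplit with ⟨u, v⟩ | ⟨u, v⟩
  · exact hki (hit i hi hhi k hhk u v hcon.1 hcon.2)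
  · exact hkj (hit j hj hhj k hhk u v hcon.1 hcon.2)

/-- The connector of K₉ joining buses `a` and `b`. -/
def connOf (a b : Fin 9) : {p : Fin 9 × Fin 9 // p.1 < p.2} :=
  if h : a < b then ⟨(a, b), h⟩ else if h' : b < a then ⟨(b, a), h'⟩ else ⟨(0, 1), by decide⟩

lemma mem_connOf {a b : Fin 9} (hab : a ≠ b) :
    a ∈ adjK9 (connOf a b) ∧ b ∈ adjK9 (connOf a b) := by
  rcases lt_trichotomy a b with h | h | h
  · simp [connOf, adjK9, h]
  · exact absurd h hab
  · simp [connOf, adjK9, h, not_lt.mpr h.le]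
/-- A bus graph with all connectors of degree at most 4 that admits a valid
partition of its buses by orientation (each connector adjacent to at most two
buses of each orientation class) yet admits no grid realization: the bus
graph obtained from K₉ by placing a degree-2 connector on each edge. -/
theorem orientation_partition_not_sufficient :
    (∃ o : Fin 9 → Bool, ∀ c, ∀ v : Bool,
      ((adjK9 c).filter fun b => o b = v).card ≤ 2) ∧
    ¬ Nonempty (Realization adjK9) := by
  constructor
  · refine ⟨fun _ => true, fun c v => ?_⟩
    exact (Finset.card_filter_le _ _).trans ((Finset.card_insert_le _ _).trans (by simp))
  · rintro ⟨R⟩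
    -- pigeonhole: five buses share an orientation
    obtain ⟨h, S, hS, hScard⟩ : ∃ (h : Bool) (S : Finset (Fin 9)),
        (∀ i ∈ S, (R.bus i).horiz = h) ∧ S.card = 5 := by
      have hsum := Finset.card_filter_add_card_filter_not
        (s := (Finset.univ : Finset (Fin 9))) (p := fun i => (R.bus i).horiz = true)
      rw [Finset.card_univ, Fintype.card_fin] at hsum
      rcases le_or_gt 5 ((Finset.univ.filter fun i : Fin 9 => (R.bus i).horiz = true).card)
        with hle | hlt
      · obtain ⟨t, ht, htc⟩ := Finset.exists_subset_card_eq hle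
        exact ⟨true, t, fun i hi => (Finset.mem_filter.mp (ht hi)).2, htc⟩
      · have hle' : 5 ≤ (Finset.univ.filter fun i : Fin 9 => ¬((R.bus i).horiz = true)).card := by
          omega
        obtain ⟨t, ht, htc⟩ := Finset.exists_subset_card_eq hle'
        refine ⟨false, t, fun i hi => ?_, htc⟩
        have := (Finset.mem_filter.mp (ht hi)).2
        simpa using this
    -- coordinates are pairwise distinct on S
    have hne : ∀ a ∈ S, ∀ b ∈ S, a ≠ b → (R.bus a).coord ≠ (R.bus b).coord := by
      intro a ha b hb hab
      obtain ⟨ma, mb⟩ := mem_connOf hab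
      cases h with
      | false => exact (pairV R ma mb hab (hS a ha) (hS b hb)).2.2.1
      | true => exact (pairH R ma mb hab (hS a ha) (hS b hb)).2.2.1
    -- sort the five buses by coordinate
    have hT : (S.image fun i => (R.bus i).coord).card = 5 := by
      rw [Finset.card_image_of_injOn, hScard]
      intro a ha b hb hcoord
      by_contra hab
      exact hne a ha b hb hab hcoord
    set T := S.image fun i => (R.bus i).coord with hTdef
    have hex : ∀ t : Fin 5, ∃ a, a ∈ S ∧ (R.bus a).coord = ((T.orderIsoOfFin hT t : T) : ℤ) := by
      intro t
      obtain ⟨a, ha, hac⟩ := Finset.mem_image.mp (T.orderIsoOfFin hT t).2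
      exact ⟨a, ha, hac⟩
    choose g hgS hgc using hex
    have hy : ∀ s t : Fin 5, s < t → (R.bus (g s)).coord < (R.bus (g t)).coord := by
      intro s t hst
      rw [hgc s, hgc t]
      exact_mod_cast (T.orderIsoOfFin hT).strictMono hst
    have hginj : Function.Injective g := by
      intro s t hgst
      by_contra hst
      rcases Ne.lt_or_gt hst with hlt | hlt
      · exact absurd (hgst ▸ hy s t hlt) (lt_irrefl _)
      · exact absurd (hgst ▸ hy t s hlt) (lt_irrefl _)
    -- apply the interval lemma
    cases h with
    | true =>
      refine no5 (fun t => (R.bus (g t)).lo) (fun t => (R.bus (g t)).hi)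
        (fun t => (R.bus (g t)).coord)
        (fun s t => (R.conn (connOf (g s) (g t))).1) hy ?_ ?_
      · intro s t hst
        have hgne : g s ≠ g t := fun e => hst (hginj e)
        obtain ⟨ma, mb⟩ := mem_connOf hgne
        have P := pairH R ma mb hgne (hS _ (hgS s)) (hS _ (hgS t))
        exact ⟨P.1.1, P.1.2, P.2.1.1, P.2.1.2⟩
      · intro s t k hst hks hkt hmin hmax
        have hgne : g s ≠ g t := fun e => hst (hginj e)
        obtain ⟨ma, mb⟩ := mem_connOf hgne
        have P := pairH R ma mb hgne (hS _ (hgS s)) (hS _ (hgS t))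
        exact P.2.2.2 (g k) (fun e => hks (hginj e)) (fun e => hkt (hginj e))
          (hS _ (hgS k)) hmin hmax
    | false =>
      refine no5 (fun t => (R.bus (g t)).lo) (fun t => (R.bus (g t)).hi)
        (fun t => (R.bus (g t)).coord)
        (fun s t => (R.conn (connOf (g s) (g t))).2) hy ?_ ?_
      · intro s t hst
        have hgne : g s ≠ g t := fun e => hst (hginj e)
        obtain ⟨ma, mb⟩ := mem_connOf hgne
        have P := pairV R ma mb hgne (hS _ (hgS s)) (hS _ (hgS t))
        exact ⟨P.1.1, P.1.2, P.2.1.1, P.2.1.2⟩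
      · intro s t k hst hks hkt hmin hmax
        have hgne : g s ≠ g t := fun e => hst (hginj e)
        obtain ⟨ma, mb⟩ := mem_connOf hgne
        have P := pairV R ma mb hgne (hS _ (hgS s)) (hS _ (hgS t))
        exact P.2.2.2 (g k) (fun e => hks (hginj e)) (fun e => hkt (hginj e))
          (hS _ (hgS k)) hmin hmax
end
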